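/- arXiv:2212.12614 — 9 statements merged into one kernel-verified Lean document; each statement's English description precedes it below -/
import Mathlib

section
/- Normal form of a Christoffel symbol at a simple pole with non-negative-integer residue (Lemma lds): Let res ∈ ℂ with res ∉ {−1, −2, −3, …}, let ε > 0 and let h : B(0,ε) → ℂ be holomorphic. Then there exist r ∈ (0, ε] and an injective holomorphic map ρ : B(0,r) → ℂ with ρ(0) = 0 and ρ′(0) ≠ 0 such that for all z ∈ B(0,r) with z ≠ 0 one has res/z + h(z) = res·ρ′(z)/ρ(z) + ρ″(z)/ρ′(z). (In the coordinate w = ρ(z), the Christoffel symbol ζ(z) = res/z + h(z) takes the normal form res/w.) -/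
open Complex Metric Set

open Filter Topology
open scoped Nat

/-!
Put `α = res + 1` and let `g = exp (∫ h)`, so that `g' = g h` and `g 0 = 1`. The required identity
says that `ρ ^ res * ρ'` and `z ^ res * g` have the same logarithmic derivative. With the ansatz
`ρ = z E ^ (1/α)` this becomes the first-order equation `z E' + α E = α g`. If `g = ∑ aₙ zⁿ`, it is
solved by `E = ∑ α / (α + n) aₙ zⁿ`: the multipliers exist because `res ∉ {-1, -2, …}` and are
bounded, so `E` converges wherever the Taylor series of `g` does. As `E 0 = 1`, the principal
branch of `E ^ (1/α)` is holomorphic near `0`, and `ρ' 0 = 1` makes `ρ` injective on a small disc.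
-/

theorem ContinuousAt.exists_mapsTo_ball {X Y : Type*} [PseudoMetricSpace X] [TopologicalSpace Y]
    {f : X → Y} {c : X} {V : Set Y} {r : ℝ} (hr : 0 < r) (hf : ContinuousAt f c)
    (hV : V ∈ 𝓝 (f c)) :
    ∃ r' ∈ Ioc 0 r, MapsTo f (ball c r') V := by
  obtain ⟨δ, hδ, hball⟩ := Metric.mem_nhds_iff.1 (hf hV)
  exact ⟨min δ r, ⟨lt_min hδ hr, min_le_right _ _⟩,
    fun x hx => hball (ball_subset_ball (min_le_left _ _) hx)⟩

theorem HasStrictDerivAt.exists_injOn_ball {𝕜 : Type*} [NontriviallyNormedField 𝕜]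
    [CompleteSpace 𝕜] {f : 𝕜 → 𝕜} {f' c : 𝕜} (hf : HasStrictDerivAt f f' c) (hf' : f' ≠ 0)
    {r : ℝ} (hr : 0 < r) :
    ∃ r' ∈ Ioc 0 r, InjOn f (ball c r') := by
  set e := (hf.hasStrictFDerivAt_equiv hf').toOpenPartialHomeomorph f
  obtain ⟨δ, hδ, hball⟩ := Metric.isOpen_iff.1 e.open_source c
    (hf.hasStrictFDerivAt_equiv hf').mem_toOpenPartialHomeomorph_source
  exact ⟨min δ r, ⟨lt_min hδ hr, min_le_right _ _⟩,
    e.injOn.mono ((ball_subset_ball (min_le_left _ _)).trans hball)⟩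

section PowerSeries

variable {𝕜 : Type*} [RCLike 𝕜] {a : ℕ → 𝕜} {t C : ℝ}

theorem exists_norm_mul_pow_le_of_summable {w : 𝕜} (ha : Summable fun n => a n * w ^ n) :
    ∃ C, ∀ n, ‖a n‖ * ‖w‖ ^ n ≤ C := by
  obtain ⟨C, hC⟩ := ha.tendsto_atTop_zero.norm.bddAbove_range
  exact ⟨C, fun n => by simpa using hC ⟨n, rfl⟩⟩

theorem summable_mul_pow_of_norm_mul_pow_le (ha : ∀ n, ‖a n‖ * t ^ n ≤ C) {z : 𝕜}
    (hz : ‖z‖ < t) :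
    Summable fun n => a n * z ^ n := by
  have ht : 0 < t := (norm_nonneg z).trans_lt hz
  refine .of_norm_bounded ((summable_geometric_of_lt_one (by positivity)
    ((div_lt_one ht).2 hz)).mul_left C) fun n => ?_
  rw [norm_mul, norm_pow]
  calc ‖a n‖ * ‖z‖ ^ n = ‖a n‖ * t ^ n * (‖z‖ / t) ^ n := by
        rw [div_pow, mul_assoc, mul_div_cancel₀ _ (pow_pos ht n).ne']
    _ ≤ C * (‖z‖ / t) ^ n := by gcongr; exact ha n

theorem hasDerivAt_tsum_mul_pow (ha : ∀ n, ‖a n‖ * t ^ n ≤ C) {z : 𝕜} (hz : ‖z‖ < t) :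
    HasDerivAt (fun w => ∑' n, a n * w ^ n) (∑' n, n * a n * z ^ (n - 1)) z := by
  obtain ⟨s, hzs, hst⟩ := exists_between hz
  have hs : 0 < s := (norm_nonneg z).trans_lt hzs
  have ht : 0 < t := hs.trans hst
  have hu : Summable fun n : ℕ => C / s * ((n : ℝ) ^ 1 * (s / t) ^ n) := by
    refine (summable_pow_mul_geometric_of_norm_lt_one (R := ℝ) 1 ?_).mul_left (C / s)
    rw [Real.norm_of_nonneg (by positivity)]
    exact (div_lt_one ht).2 hst
  have hderiv (n : ℕ) (w : 𝕜) :
      HasDerivAt (fun w => a n * w ^ n) (n * a n * w ^ (n - 1)) w :=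
    ((hasDerivAt_pow n w).const_mul (a n)).congr_deriv (by ring)
  refine hasDerivAt_tsum_of_isPreconnected (g := fun n w => a n * w ^ n)
    (g' := fun n w => n * a n * w ^ (n - 1)) hu isOpen_ball (convex_ball 0 s).isPreconnected
    (fun n w _ => hderiv n w) (fun n w hw => ?_) (mem_ball_self hs)
    (summable_mul_pow_of_norm_mul_pow_le ha (by simpa using ht)) (mem_ball_zero_iff.2 hzs)
  rw [mem_ball_zero_iff] at hw
  rcases n with _ | n
  · simp
  rw [norm_mul, norm_mul, norm_pow, RCLike.norm_natCast, pow_one, add_tsub_cancel_right]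
  calc (↑(n + 1) : ℝ) * ‖a (n + 1)‖ * ‖w‖ ^ n ≤ (↑(n + 1) : ℝ) * ‖a (n + 1)‖ * s ^ n := by
        gcongr
    _ = ‖a (n + 1)‖ * t ^ (n + 1) * (↑(n + 1) * (s / t) ^ (n + 1) / s) := by
        rw [div_pow, pow_succ s]
        field_simp
    _ ≤ C / s * (↑(n + 1) * (s / t) ^ (n + 1)) := by
        rw [mul_div_assoc', div_mul_eq_mul_div]
        gcongr ?_ * _ / _
        exact ha _

end PowerSeries

theorem tendsto_div_add_natCast_atTop {𝕜 : Type*} [RCLike 𝕜] (α : 𝕜) :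
    Tendsto (fun n : ℕ => α / (α + n)) atTop (𝓝 0) := by
  simpa [div_eq_mul_inv] using tendsto_const_nhds.mul (tendsto_inv₀_cobounded.comp
    ((tendsto_const_add_cobounded α).comp tendsto_natCast_atTop_cobounded))

theorem hasSum_taylorCoeff_mul_pow {g : ℂ → ℂ} {s : ℝ} (hg : DifferentiableOn ℂ g (ball 0 s))
    {z : ℂ} (hz : z ∈ ball 0 s) :
    HasSum (fun n => (n ! : ℂ)⁻¹ * iteratedDeriv n g 0 * z ^ n) (g z) := by
  simpa [smul_eq_mul, mul_comm, mul_left_comm] using Complex.hasSum_taylorSeries_on_ball hg hz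

theorem exists_mul_deriv_add_mul_eq {α : ℂ} (hα : ∀ n : ℕ, α + n ≠ 0) {g : ℂ → ℂ} {s : ℝ}
    (hg : DifferentiableOn ℂ g (ball 0 s)) :
    ∃ E : ℂ → ℂ, E 0 = g 0 ∧ DifferentiableOn ℂ E (ball 0 s) ∧
      ∀ z ∈ ball 0 s, z * deriv E z + α * E z = α * g z := by
  obtain ⟨a, ha0, hga⟩ : ∃ a : ℕ → ℂ, a 0 = g 0 ∧
      ∀ z ∈ ball 0 s, HasSum (fun n => a n * z ^ n) (g z) :=
    ⟨_, by simp, fun z hz => hasSum_taylorCoeff_mul_pow hg hz⟩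
  obtain ⟨b, hb_def⟩ : ∃ b : ℕ → ℂ, b = fun n => α / (α + n) * a n := ⟨_, rfl⟩
  have hb (n : ℕ) : (α + n) * b n = α * a n := by
    rw [hb_def, ← mul_assoc, mul_div_cancel₀ _ (hα n)]
  obtain ⟨M, hM⟩ := (tendsto_div_add_natCast_atTop α).norm.bddAbove_range
  have hbound : ∀ z ∈ ball (0 : ℂ) s, ∃ t C, ‖z‖ < t ∧ ∀ n, ‖b n‖ * t ^ n ≤ C := by
    intro z hz
    obtain ⟨t, hzt, hts⟩ := exists_between (mem_ball_zero_iff.1 hz)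
    have ht : 0 ≤ t := (norm_nonneg z).trans hzt.le
    obtain ⟨C, hC⟩ := exists_norm_mul_pow_le_of_summable
      (hga t (by simpa [abs_of_nonneg ht] using hts)).summable
    refine ⟨t, M * C, hzt, fun n => ?_⟩
    calc ‖b n‖ * t ^ n = ‖α / (α + n)‖ * (‖a n‖ * ‖(t : ℂ)‖ ^ n) := by
          rw [hb_def, norm_mul, Complex.norm_real, Real.norm_of_nonneg ht, mul_assoc]
      _ ≤ M * C := mul_le_mul (hM ⟨n, rfl⟩) (hC n) (by positivity)
          ((norm_nonneg _).trans (hM ⟨0, rfl⟩))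
  have hE (z : ℂ) (hz : z ∈ ball 0 s) :
      HasDerivAt (fun w => ∑' n, b n * w ^ n) (∑' n, n * b n * z ^ (n - 1)) z := by
    obtain ⟨t, C, hzt, hbC⟩ := hbound z hz
    exact hasDerivAt_tsum_mul_pow hbC hzt
  refine ⟨fun w => ∑' n, b n * w ^ n, ?_,
    fun z hz => (hE z hz).differentiableAt.differentiableWithinAt, fun z hz => ?_⟩
  · show ∑' n, b n * 0 ^ n = g 0
    rw [tsum_eq_single 0 fun n hn => by simp [zero_pow hn], ← ha0]
    simpa using mul_left_cancel₀ (by simpa using hα 0) (by simpa using hb 0)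
  obtain ⟨t, C, hzt, hbC⟩ := hbound z hz
  have hterm (n : ℕ) :
      z * (n * b n * z ^ (n - 1)) = α * (a n * z ^ n) - α * (b n * z ^ n) := by
    rcases n with _ | n
    · linear_combination hb 0
    · rw [Nat.add_sub_cancel]
      linear_combination z ^ (n + 1) * hb (n + 1)
  rw [(hE z hz).deriv, ← tsum_mul_left, tsum_congr hterm,
    Summable.tsum_sub ((hga z hz).summable.mul_left α)
      ((summable_mul_pow_of_norm_mul_pow_le hbC hzt).mul_left α),
    tsum_mul_left, tsum_mul_left, (hga z hz).tsum_eq]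
  ring

theorem exists_hasDerivAt_self_mul_of_differentiableOn {h : ℂ → ℂ} {c : ℂ} {r : ℝ}
    (hh : DifferentiableOn ℂ h (ball c r)) :
    ∃ g : ℂ → ℂ, g c = 1 ∧ (∀ z, g z ≠ 0) ∧ ∀ z ∈ ball c r, HasDerivAt g (g z * h z) z := by
  obtain ⟨H, hH0, hH⟩ := hh.isExactOn_ball.with_val_at c 0
  exact ⟨fun w => cexp (H w), by simp [hH0], fun _ => exp_ne_zero _, fun z hz => (hH z hz).cexp⟩

section

variable {α : ℂ} {E g : ℂ → ℂ} {z : ℂ}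

theorem hasDerivAt_cpow_const_of_mem_slitPlane (hE : DifferentiableAt ℂ E z)
    (hslit : E z ∈ slitPlane) :
    HasDerivAt (fun w => E w ^ α) (E z ^ α * (α * (deriv E z / E z))) z := by
  refine (hE.hasDerivAt.cpow_const hslit).congr_deriv ?_
  rw [cpow_sub _ _ (slitPlane_ne_zero hslit), cpow_one]
  ring

theorem hasDerivAt_mul_cpow_inv (hα : α ≠ 0) (hE : DifferentiableAt ℂ E z)
    (hslit : E z ∈ slitPlane) (hode : z * deriv E z + α * E z = α * g z) :
    HasDerivAt (fun w => w * E w ^ α⁻¹) (E z ^ α⁻¹ * g z / E z) z := by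
  refine ((hasDerivAt_id z).mul (hasDerivAt_cpow_const_of_mem_slitPlane hE hslit)).congr_deriv ?_
  have hEz := slitPlane_ne_zero hslit
  rw [id]
  generalize E z ^ α⁻¹ = A
  field_simp
  linear_combination A * hode

theorem div_add_eq_christoffel_of_eq_mul_cpow_inv {res : ℂ} (hres : res + 1 ≠ 0)
    {ρ h : ℂ → ℂ} (hρ : ρ = fun w => w * E w ^ (res + 1)⁻¹) {U : Set ℂ} (hU : IsOpen U)
    (hE : DifferentiableOn ℂ E U) (hslit : MapsTo E U slitPlane)
    (hode : ∀ w ∈ U, w * deriv E w + (res + 1) * E w = (res + 1) * g w)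
    (hg : HasDerivAt g (g z * h z) z) (hg0 : g z ≠ 0) (hz : z ∈ U) (hz0 : z ≠ 0) :
    res / z + h z = res * deriv ρ z / ρ z + deriv (deriv ρ) z / deriv ρ z := by
  subst hρ
  have hEd (w : ℂ) (hw : w ∈ U) : DifferentiableAt ℂ E w := hE.differentiableAt (hU.mem_nhds hw)
  have hρ' : deriv (fun w => w * E w ^ (res + 1)⁻¹) =ᶠ[𝓝 z]
      fun w => E w ^ (res + 1)⁻¹ * g w / E w :=
    eventually_of_mem (hU.mem_nhds hz) fun w hw =>
      (hasDerivAt_mul_cpow_inv hres (hEd w hw) (hslit hw) (hode w hw)).deriv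
  have hρ'' : HasDerivAt (fun w => E w ^ (res + 1)⁻¹ * g w / E w) _ z :=
    ((hasDerivAt_cpow_const_of_mem_slitPlane (hEd z hz) (hslit hz)).mul hg).div
      (hEd z hz).hasDerivAt (slitPlane_ne_zero (hslit hz))
  rw [hρ'.deriv_eq, hρ'.eq_of_nhds, hρ''.deriv]
  have hEz := slitPlane_ne_zero (hslit hz)
  have hAz : E z ^ (res + 1)⁻¹ ≠ 0 := by simp [cpow_eq_zero_iff, hEz]
  have hodez := hode z hz
  simp only [Pi.mul_apply]
  generalize E z ^ (res + 1)⁻¹ = A at *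
  field_simp
  linear_combination res * hodez

end

/-- Normal form of a Christoffel symbol at a simple pole whose residue is not a
negative integer: there is a holomorphic change of coordinate `ρ` near `0`, fixing `0`,
with nonvanishing derivative at `0`, in which the symbol `res/z + h z` becomes `res/w`. -/
theorem normal_form_simple_pole (res : ℂ) (hres : ∀ n : ℕ, res ≠ -(n + 1 : ℂ))
    (ε : ℝ) (hε : 0 < ε) (h : ℂ → ℂ) (hh : DifferentiableOn ℂ h (ball 0 ε)) :
    ∃ r : ℝ, r ∈ Set.Ioc 0 ε ∧ ∃ ρ : ℂ → ℂ,
      DifferentiableOn ℂ ρ (ball 0 r) ∧ Set.InjOn ρ (ball 0 r) ∧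
      ρ 0 = 0 ∧ deriv ρ 0 ≠ 0 ∧
      ∀ z ∈ ball (0 : ℂ) r, z ≠ 0 →
        res / z + h z = res * deriv ρ z / ρ z + deriv (deriv ρ) z / deriv ρ z := by
  have hα (n : ℕ) : res + 1 + n ≠ 0 := fun h0 => hres n (by linear_combination h0)
  obtain ⟨g, hg1, hg0, hg⟩ := exists_hasDerivAt_self_mul_of_differentiableOn hh
  obtain ⟨E, hE0, hE, hode⟩ := exists_mul_deriv_add_mul_eq hα
    fun z hz => (hg z hz).differentiableAt.differentiableWithinAt
  obtain ⟨r₁, ⟨hr₁, hr₁ε⟩, hslit⟩ := ContinuousAt.exists_mapsTo_ball hε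
    (hE.continuousOn.continuousAt (ball_mem_nhds 0 hε))
    (isOpen_slitPlane.mem_nhds (by simp [hE0, hg1]))
  have hsub : ball (0 : ℂ) r₁ ⊆ ball 0 ε := ball_subset_ball hr₁ε
  set ρ : ℂ → ℂ := fun w => w * E w ^ (res + 1)⁻¹ with hρ
  have hρ' (z : ℂ) (hz : z ∈ ball 0 r₁) : HasDerivAt ρ (E z ^ (res + 1)⁻¹ * g z / E z) z :=
    hasDerivAt_mul_cpow_inv (by simpa using hα 0)
      (hE.differentiableAt (isOpen_ball.mem_nhds (hsub hz))) (hslit hz) (hode z (hsub hz))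
  have hρ'0 : deriv ρ 0 ≠ 0 := by simp [(hρ' 0 (mem_ball_self hr₁)).deriv, hE0, hg1]
  have hρd : DifferentiableOn ℂ ρ (ball 0 r₁) :=
    fun z hz => (hρ' z hz).differentiableAt.differentiableWithinAt
  obtain ⟨r, ⟨hr, hrr₁⟩, hinj⟩ :=
    (hρd.analyticAt (ball_mem_nhds 0 hr₁)).hasStrictDerivAt.exists_injOn_ball hρ'0 hr₁
  have hball : ball (0 : ℂ) r ⊆ ball 0 r₁ := ball_subset_ball hrr₁
  refine ⟨r, ⟨hr, hrr₁.trans hr₁ε⟩, ρ, hρd.mono hball, hinj, by simp [ρ], hρ'0,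
    fun z hz hz0 => ?_⟩
  exact div_add_eq_christoffel_of_eq_mul_cpow_inv (by simpa using hα 0) hρ isOpen_ball
    (hE.mono hsub) hslit (fun w hw => hode w (hsub hw)) (hg z (hsub (hball hz))) (hg0 z)
    (hball hz) hz0
end

section
/- Asymptotics of straightening charts near an unbounded singularity, derivative form (Lemma uch, part 1, in the logarithmic coordinate): Let res ∈ ℂ with Re(res) < −1, let r > 0, and let h : B(0,r) → ℂ be holomorphic and bounded. Set H = {v ∈ ℂ : Re v < log r} and suppose φ̂ : H → ℂ is holomorphic with φ̂′(v) ≠ 0 for all v ∈ H and φ̂″(v)/φ̂′(v) = (1 + res) + e^v·h(e^v) for all v ∈ H. Then there exist a ∈ ℂ, a ≠ 0, and a holomorphic function r₁ : B(0,r) → ℂ with r₁(0) = 0 such that for all v ∈ H: φ̂′(v) = a·e^{(1+res)v}·(1 + r₁(e^v)). -/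
/-!
A primitive `L` of `h` on the disc turns the equation into
`(φ̂′)′/φ̂′ = (v ↦ (1 + res) v + L(eᵛ))′` on the connected half plane `Re v < log r`, so `φ̂′` is a
nonzero multiple of `exp ((1 + res) v + L(eᵛ))`; normalising `L 0 = 0` makes
`r₁ = exp ∘ L - 1` vanish at `0`.
-/

open Complex Metric Set

theorem Complex.exists_eqOn_mul_exp_of_hasDerivAt_logDeriv {f Q : ℂ → ℂ} {s : Set ℂ}
    (hs : IsOpen s) (hs' : IsPreconnected s) (hf : DifferentiableOn ℂ f s)
    (hf₀ : ∀ x ∈ s, f x ≠ 0) (hQ : ∀ x ∈ s, HasDerivAt Q (logDeriv f x) x) :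
    ∃ a : ℂ, a ≠ 0 ∧ EqOn f (fun x => a * exp (Q x)) s := by
  have hexpQ : DifferentiableOn ℂ (fun x => exp (Q x)) s :=
    fun x hx => (hQ x hx).differentiableAt.differentiableWithinAt.cexp
  have hlog : EqOn (logDeriv f) (logDeriv fun x => exp (Q x)) s := fun x hx => by
    rw [logDeriv_apply (fun x => exp (Q x)), (hQ x hx).cexp.deriv,
      mul_div_cancel_left₀ _ (exp_ne_zero _)]
  exact (logDeriv_eqOn_iff hf hexpQ hs hs' (fun x _ => exp_ne_zero _) hf₀).mp hlog

theorem Complex.exp_mem_ball_zero {r : ℝ} (hr : 0 < r) {v : ℂ} (hv : v.re < Real.log r) :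
    exp v ∈ ball (0 : ℂ) r := by
  rw [mem_ball_zero_iff, norm_exp, ← Real.exp_log hr]
  exact Real.exp_lt_exp.mpr hv

theorem hasDerivAt_linear_add_comp_exp {r : ℝ} (hr : 0 < r) {L h : ℂ → ℂ}
    (hL : ∀ z ∈ ball (0 : ℂ) r, HasDerivAt L (h z) z) (c : ℂ) {v : ℂ} (hv : v.re < Real.log r) :
    HasDerivAt (fun w => c * w + L (exp w)) (c + exp v * h (exp v)) v := by
  have hLexp := (hL _ (exp_mem_ball_zero hr hv)).comp v (hasDerivAt_exp v)
  exact (((hasDerivAt_id' v).const_mul c).add hLexp).congr_deriv (by rw [mul_one, mul_comm])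

theorem straightening_chart_deriv_asymptotics_general
    (res : ℂ) (r : ℝ) (hr : 0 < r)
    (h : ℂ → ℂ) (hh : DifferentiableOn ℂ h (ball 0 r))
    (φ : ℂ → ℂ)
    (hφ : DifferentiableOn ℂ φ {v : ℂ | v.re < Real.log r})
    (hφ' : ∀ v : ℂ, v.re < Real.log r → deriv φ v ≠ 0)
    (heq : ∀ v : ℂ, v.re < Real.log r →
      deriv (deriv φ) v / deriv φ v = (1 + res) + Complex.exp v * h (Complex.exp v)) :
    ∃ a : ℂ, a ≠ 0 ∧ ∃ r₁ : ℂ → ℂ,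
      DifferentiableOn ℂ r₁ (ball 0 r) ∧ r₁ 0 = 0 ∧
      ∀ v : ℂ, v.re < Real.log r →
        deriv φ v = a * Complex.exp ((1 + res) * v) * (1 + r₁ (Complex.exp v)) := by
  obtain ⟨L, hL0, hL⟩ := hh.isExactOn_ball.with_val_at 0 0
  have hH : IsOpen {v : ℂ | v.re < Real.log r} := isOpen_lt continuous_re continuous_const
  obtain ⟨a, ha, hφa⟩ := exists_eqOn_mul_exp_of_hasDerivAt_logDeriv hH
    (convex_halfSpace_re_lt _).isPreconnected (hφ.deriv hH) hφ' fun v hv => by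
      rw [logDeriv_apply, heq v hv]
      exact hasDerivAt_linear_add_comp_exp hr hL (1 + res) hv
  have hLdiff : DifferentiableOn ℂ L (ball 0 r) :=
    fun z hz => (hL z hz).differentiableAt.differentiableWithinAt
  refine ⟨a, ha, fun z => exp (L z) - 1, hLdiff.cexp.sub_const 1, by simp [hL0], fun v hv => ?_⟩
  rw [hφa hv, add_sub_cancel]
  simp only [exp_add, mul_assoc]

/-- Asymptotics (derivative form) of a straightening chart near an unbounded singularity,
in the logarithmic coordinate: if `φ̂″/φ̂′ = (1 + res) + eᵛ h(eᵛ)` on the half plane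
`Re v < log r` with `Re res < -1`, then `φ̂′(v) = a e^{(1+res)v} (1 + r₁(eᵛ))` with
`r₁` holomorphic on `B(0,r)` and `r₁ 0 = 0`. -/
theorem straightening_chart_deriv_asymptotics
    (res : ℂ) (hres : res.re < -1) (r : ℝ) (hr : 0 < r)
    (h : ℂ → ℂ) (hh : DifferentiableOn ℂ h (ball 0 r))
    (hbdd : ∃ M : ℝ, ∀ z ∈ ball (0 : ℂ) r, ‖h z‖ ≤ M)
    (φ : ℂ → ℂ)
    (hφ : DifferentiableOn ℂ φ {v : ℂ | v.re < Real.log r})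
    (hφ' : ∀ v : ℂ, v.re < Real.log r → deriv φ v ≠ 0)
    (heq : ∀ v : ℂ, v.re < Real.log r →
      deriv (deriv φ) v / deriv φ v = (1 + res) + Complex.exp v * h (Complex.exp v)) :
    ∃ a : ℂ, a ≠ 0 ∧ ∃ r₁ : ℂ → ℂ,
      DifferentiableOn ℂ r₁ (ball 0 r) ∧ r₁ 0 = 0 ∧
      ∀ v : ℂ, v.re < Real.log r →
        deriv φ v = a * Complex.exp ((1 + res) * v) * (1 + r₁ (Complex.exp v)) :=
  straightening_chart_deriv_asymptotics_general res r hr h hh φ hφ hφ' heq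
end

section
/- Asymptotics of straightening charts near an unbounded singularity, integrated form (Lemma uch, part 2, in the logarithmic coordinate): Let res ∈ ℂ with Re(res) < −1, let r > 0, and let h : B(0,r) → ℂ be holomorphic and bounded. Set H = {v ∈ ℂ : Re v < log r} and suppose φ̂ : H → ℂ is holomorphic with φ̂′(v) ≠ 0 for all v ∈ H and φ̂″(v)/φ̂′(v) = (1 + res) + e^v·h(e^v) for all v ∈ H. Then there exists b ∈ ℂ, b ≠ 0, such that for all real α₀ < α₁ and all r′ ∈ (0,r) there exist constants C, C′ ≥ 0 with: for every v ∈ ℂ satisfying Re v ≤ log r′ and α₀ < Im((1+res)v) < α₁, one has |φ̂(v) − b·e^{(1+res)v}| ≤ max(1, e^{Re((2+res)v)})·(C′ + C·max(0, Re((1+res)v))). In particular φ̂(v)/(b·e^{(1+res)v}) → 1 as Re((1+res)v) → +∞ with v subject to these constraints. -/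
/-!
Write `s = 1 + res`. The equation says `(log φ̂′)′ = s + eᵛ h(eᵛ)`, and if `k` is the primitive
of `h` on the disc with `k 0 = 0`, then `v ↦ k(eᵛ)` is a primitive of the second term; hence
`φ̂′ = c · exp(s v + k(eᵛ))` with `c ≠ 0`, and we take `b = c / s`. The derivative of
`φ̂ − b e^{sv}` is `c e^{sv} (e^{k(eᵛ)} − 1) = O(e^{Re((1+s)v)})`, because `k(z) = O(|z|)` on every
smaller disc. Integrate it along the segment from `log r'` to `v`: on the segment,
`e^{Re((1+s)w)}` is at most its value at an endpoint, and since `Re s < 0`, on the region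
`Re v ≤ log r'`, `α₀ < Im(sv) < α₁` the length of the segment is `O(1 + max(0, Re(sv)))`.
-/
open Complex Metric Set

theorem re_mul_le_max_of_mem_segment (a : ℂ) {u v w : ℂ} (hw : w ∈ segment ℝ u v) :
    (a * w).re ≤ max (a * u).re (a * v).re :=
  (LinearMap.convexOn (Complex.reLm.comp (LinearMap.mulLeft ℝ a)) convex_univ).le_on_segment
    (mem_univ u) (mem_univ v) hw

theorem norm_cexp_sub_one_le {z : ℂ} {K : ℝ} (hz : ‖z‖ ≤ K) :
    ‖cexp z - 1‖ ≤ ‖z‖ * Real.exp K := by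
  have := norm_exp_sub_sum_le_norm_mul_exp z 1
  simp only [Finset.range_one, Finset.sum_singleton, pow_zero, Nat.factorial_zero, Nat.cast_one,
    div_one, pow_one] at this
  exact this.trans (by gcongr)

theorem exists_norm_le_mul_norm_of_hasDerivAt {E : Type*} [NormedAddCommGroup E]
    [NormedSpace ℂ E] {k k' : ℂ → E} {r r' : ℝ} (hr' : r' < r) (hk0 : k 0 = 0)
    (hk : ∀ z ∈ ball (0 : ℂ) r, HasDerivAt k (k' z) z) (hk' : ContinuousOn k' (ball 0 r)) :
    ∃ K, 0 ≤ K ∧ ∀ z ∈ closedBall (0 : ℂ) r', ‖k z‖ ≤ K * ‖z‖ := by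
  obtain ⟨K, hK⟩ := (isCompact_closedBall (0 : ℂ) r').exists_bound_of_continuousOn
    (hk'.mono (closedBall_subset_ball hr'))
  refine ⟨max K 0, le_max_right _ _, fun z hz => ?_⟩
  have := (convex_closedBall (0 : ℂ) r').norm_image_sub_le_of_norm_hasDerivWithin_le
    (fun w hw => (hk w (closedBall_subset_ball hr' hw)).hasDerivWithinAt)
    (fun w hw => (hK w hw).trans (le_max_left K 0)) (mem_closedBall_self (dist_nonneg.trans hz)) hz
  simpa [hk0] using this

theorem IsOpen.exists_eq_mul_cexp_of_hasDerivAt {U : Set ℂ} (hU : IsOpen U)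
    (hU' : IsPreconnected U) {f g g' : ℂ → ℂ} (hf : ∀ z ∈ U, HasDerivAt f (g' z * f z) z)
    (hg : ∀ z ∈ U, HasDerivAt g (g' z) z) : ∃ c, ∀ z ∈ U, f z = c * cexp (g z) := by
  have hF : ∀ z ∈ U, HasDerivAt (fun z => f z * cexp (-g z)) 0 z := fun z hz =>
    ((hf z hz).mul (hg z hz).neg.cexp).congr_deriv (by ring)
  obtain ⟨c, hc⟩ := hU.exists_is_const_of_deriv_eq_zero hU'
    (fun z hz => (hF z hz).differentiableAt.differentiableWithinAt) (fun z hz => (hF z hz).deriv)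
  refine ⟨c, fun z hz => ?_⟩
  rw [← hc z hz, mul_assoc, ← Complex.exp_add, neg_add_cancel, Complex.exp_zero, mul_one]

theorem exists_norm_le_add_mul_max_re {s : ℂ} (hs : s.re < 0) (L B : ℝ) :
    ∃ K₁ K₂ : ℝ, 0 ≤ K₁ ∧ 0 ≤ K₂ ∧ ∀ v : ℂ, v.re ≤ L → |(s * v).im| ≤ B →
      ‖v‖ ≤ K₁ + K₂ * max 0 (s * v).re := by
  have hs0 : 0 < ‖s‖ := norm_pos_iff.2 fun h => by simp [h] at hs
  set K₃ := (normSq s * |L| + |B| * |s.im|) / -s.re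
  have hK₃ : 0 ≤ K₃ :=
    div_nonneg (add_nonneg (mul_nonneg (normSq_nonneg s) (abs_nonneg L)) (by positivity))
      (by linarith)
  refine ⟨(K₃ + |B|) / ‖s‖, 1 / ‖s‖, div_nonneg (by positivity) hs0.le, by positivity,
    fun v hv hB => ?_⟩
  set w := s * v
  have hB' : |w.im| ≤ |B| := hB.trans (le_abs_self B)
  -- `Re (w * conj s) = ‖s‖² Re v` bounds `Re w` from below, since `Re s < 0`.
  have hre : w.re * s.re + w.im * s.im = normSq s * v.re := by
    simp only [w, mul_re, mul_im, normSq_apply]; ring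
  have hwre : -K₃ ≤ w.re := by
    rw [neg_le, le_div_iff₀ (by linarith)]
    have := mul_le_mul_of_nonneg_left (hv.trans (le_abs_self L)) (normSq_nonneg s)
    have := mul_le_mul_of_nonneg_right hB' (abs_nonneg s.im)
    linarith [neg_abs_le (w.im * s.im), abs_mul w.im s.im]
  have hw : ‖w‖ ≤ max 0 w.re + K₃ + |B| := by
    have : |w.re| ≤ max 0 w.re + K₃ :=
      abs_le.2 ⟨by linarith [le_max_left 0 w.re], by linarith [le_max_right 0 w.re]⟩
    linarith [norm_le_abs_re_add_abs_im w]
  rw [show (K₃ + |B|) / ‖s‖ + 1 / ‖s‖ * max 0 w.re = (max 0 w.re + K₃ + |B|) / ‖s‖ by ring,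
    le_div_iff₀ hs0, mul_comm, ← norm_mul]
  exact hw

section GrowthOnHalfPlane

variable {E : Type*} [NormedAddCommGroup E] [NormedSpace ℂ E] {Φ Φ' : ℂ → E} {a : ℂ} {C₀ : ℝ}

theorem norm_sub_le_of_norm_deriv_le_exp_re {S : Set ℂ} (hS : Convex ℝ S)
    (hΦ : ∀ w ∈ S, HasDerivAt Φ (Φ' w) w) (hΦ' : ∀ w ∈ S, ‖Φ' w‖ ≤ C₀ * Real.exp (a * w).re)
    (hC₀ : 0 ≤ C₀) {u v : ℂ} (hu : u ∈ S) (hv : v ∈ S) :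
    ‖Φ v - Φ u‖ ≤ C₀ * max (Real.exp (a * u).re) (Real.exp (a * v).re) * ‖v - u‖ := by
  have hsub : segment ℝ u v ⊆ S := hS.segment_subset hu hv
  refine (convex_segment u v).norm_image_sub_le_of_norm_hasDerivWithin_le
    (fun w hw => (hΦ w (hsub hw)).hasDerivWithinAt) (fun w hw => ?_)
    (left_mem_segment ℝ u v) (right_mem_segment ℝ u v)
  rw [← Real.exp_monotone.map_max]
  exact (hΦ' w (hsub hw)).trans
    (by gcongr; exact re_mul_le_max_of_mem_segment a hw)

theorem exists_norm_le_of_norm_deriv_le_exp_re {s : ℂ} (hs : s.re < 0) {L : ℝ}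
    (hΦ : ∀ w : ℂ, w.re ≤ L → HasDerivAt Φ (Φ' w) w)
    (hΦ' : ∀ w : ℂ, w.re ≤ L → ‖Φ' w‖ ≤ C₀ * Real.exp (a * w).re) (hC₀ : 0 ≤ C₀)
    (α₀ α₁ : ℝ) :
    ∃ C C' : ℝ, 0 ≤ C ∧ 0 ≤ C' ∧ ∀ v : ℂ, v.re ≤ L → α₀ < (s * v).im → (s * v).im < α₁ →
      ‖Φ v‖ ≤ max 1 (Real.exp (a * v).re) * (C' + C * max 0 (s * v).re) := by
  obtain ⟨K₁, K₂, hK₁, hK₂, hv_le⟩ := exists_norm_le_add_mul_max_re hs L (max |α₀| |α₁|)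
  set u : ℂ := (L : ℂ)
  have hu : u.re ≤ L := by simp [u]
  set m := max (Real.exp (a * u).re) 1
  refine ⟨C₀ * m * K₂, ‖Φ u‖ + C₀ * m * (K₁ + ‖u‖), by positivity, by positivity,
    fun v hv h₀ h₁ => ?_⟩
  set E := Real.exp (a * v).re
  have him : |(s * v).im| ≤ max |α₀| |α₁| :=
    abs_le.2 ⟨by linarith [neg_abs_le α₀, le_max_left |α₀| |α₁|],
      by linarith [le_abs_self α₁, le_max_right |α₀| |α₁|]⟩
  have hvu : ‖v - u‖ ≤ K₁ + ‖u‖ + K₂ * max 0 (s * v).re := by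
    linarith [norm_sub_le v u, hv_le v hv him]
  have hmax : max (Real.exp (a * u).re) E ≤ m * max 1 E :=
    max_le ((le_max_left _ _).trans (le_mul_of_one_le_right (by positivity) (le_max_left _ _)))
      ((le_max_right 1 E).trans (le_mul_of_one_le_left (by positivity) (le_max_right _ _)))
  have hΦvu := norm_sub_le_of_norm_deriv_le_exp_re (convex_halfSpace_re_le L) hΦ hΦ' hC₀ hu hv
  calc ‖Φ v‖ ≤ ‖Φ u‖ + ‖Φ v - Φ u‖ := norm_le_insert' _ _
    _ ≤ ‖Φ u‖ + C₀ * (m * max 1 E) * (K₁ + ‖u‖ + K₂ * max 0 (s * v).re) := by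
      gcongr
      exact hΦvu.trans (by gcongr)
    _ ≤ max 1 E * (‖Φ u‖ + C₀ * m * (K₁ + ‖u‖) + C₀ * m * K₂ * max 0 (s * v).re) := by
      nlinarith [le_max_left 1 E, norm_nonneg (Φ u)]

end GrowthOnHalfPlane

theorem norm_cexp_comp_cexp_sub_one_le {k : ℂ → ℂ} {K r' : ℝ} (hr' : 0 < r') (hK : 0 ≤ K)
    (hk : ∀ z ∈ closedBall (0 : ℂ) r', ‖k z‖ ≤ K * ‖z‖) {w : ℂ} (hw : w.re ≤ Real.log r') :
    ‖cexp (k (cexp w)) - 1‖ ≤ K * Real.exp (K * r') * Real.exp w.re := by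
  have hw' : ‖cexp w‖ ≤ r' := by
    rwa [norm_exp, ← Real.le_log_iff_exp_le hr']
  have hkw := hk _ (mem_closedBall_zero_iff.2 hw')
  calc ‖cexp (k (cexp w)) - 1‖ ≤ ‖k (cexp w)‖ * Real.exp (K * r') :=
        norm_cexp_sub_one_le (hkw.trans (by gcongr))
    _ ≤ K * ‖cexp w‖ * Real.exp (K * r') := by gcongr
    _ = K * Real.exp (K * r') * Real.exp w.re := by rw [norm_exp]; ring

theorem exists_deriv_eq_mul_cexp {s : ℂ} {L : ℝ} {g k : ℂ → ℂ} {φ : ℂ → ℂ}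
    (hφ : DifferentiableOn ℂ φ {v : ℂ | v.re < L}) (hφ' : ∀ v : ℂ, v.re < L → deriv φ v ≠ 0)
    (heq : ∀ v : ℂ, v.re < L → deriv (deriv φ) v / deriv φ v = s + g v)
    (hk : ∀ v : ℂ, v.re < L → HasDerivAt k (g v) v) :
    ∃ c ≠ 0, ∀ v : ℂ, v.re < L → deriv φ v = c * cexp (s * v + k v) := by
  have hH : IsOpen {v : ℂ | v.re < L} := isOpen_lt continuous_re continuous_const
  have hψ : ∀ v : ℂ, v.re < L → HasDerivAt (deriv φ) ((s + g v) * deriv φ v) v := fun v hv => by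
    rw [← heq v hv, div_mul_cancel₀ _ (hφ' v hv)]
    exact ((hφ.deriv hH).differentiableAt (hH.mem_nhds hv)).hasDerivAt
  obtain ⟨c, hc⟩ := hH.exists_eq_mul_cexp_of_hasDerivAt (g := fun v => s * v + k v)
    (convex_halfSpace_re_lt L).isPreconnected hψ
    (fun v hv => by simpa using ((hasDerivAt_id v).const_mul s).fun_add (hk v hv))
  have hL : ((L - 1 : ℝ) : ℂ).re < L := by simp
  refine ⟨c, fun hc0 => hφ' _ hL (by rw [hc _ hL, hc0, zero_mul]), hc⟩

theorem straightening_chart_asymptotics_general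
    (res : ℂ) (hres : res.re < -1) (r : ℝ) (hr : 0 < r)
    (h : ℂ → ℂ) (hh : DifferentiableOn ℂ h (ball 0 r))
    (φ : ℂ → ℂ)
    (hφ : DifferentiableOn ℂ φ {v : ℂ | v.re < Real.log r})
    (hφ' : ∀ v : ℂ, v.re < Real.log r → deriv φ v ≠ 0)
    (heq : ∀ v : ℂ, v.re < Real.log r →
      deriv (deriv φ) v / deriv φ v = (1 + res) + Complex.exp v * h (Complex.exp v)) :
    ∃ b : ℂ, b ≠ 0 ∧
      ∀ α₀ α₁ : ℝ, α₀ < α₁ → ∀ r' : ℝ, 0 < r' → r' < r →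
        ∃ C C' : ℝ, 0 ≤ C ∧ 0 ≤ C' ∧
          ∀ v : ℂ, v.re ≤ Real.log r' →
            α₀ < ((1 + res) * v).im → ((1 + res) * v).im < α₁ →
            ‖φ v - b * Complex.exp ((1 + res) * v)‖ ≤
              max 1 (Real.exp (((2 + res) * v).re)) *
                (C' + C * max 0 (((1 + res) * v).re)) := by
  have hs : (1 + res).re < 0 := by simp only [add_re, one_re]; linarith
  have hs0 : 1 + res ≠ 0 := fun h0 => by simp [h0] at hs
  obtain ⟨k, hk0, hk⟩ := hh.isExactOn_ball.with_val_at 0 0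
  obtain ⟨c, hc0, hc⟩ := exists_deriv_eq_mul_cexp (k := fun v => k (cexp v)) hφ hφ' heq
    fun v hv => by
      have hv' : cexp v ∈ ball 0 r := by
        rwa [mem_ball_zero_iff, norm_exp, ← Real.lt_log_iff_exp_lt hr]
      exact ((hk _ hv').comp v (hasDerivAt_exp v)).congr_deriv (mul_comm _ _)
  refine ⟨c / (1 + res), div_ne_zero hc0 hs0, fun α₀ α₁ _ r' hr' hr'r => ?_⟩
  obtain ⟨K, hK, hkK⟩ := exists_norm_le_mul_norm_of_hasDerivAt hr'r hk0 hk hh.continuousOn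
  refine exists_norm_le_of_norm_deriv_le_exp_re
    (Φ' := fun w => c * cexp ((1 + res) * w) * (cexp (k (cexp w)) - 1)) hs (fun w hw => ?_)
    (fun w hw => ?_) (by positivity : 0 ≤ ‖c‖ * (K * Real.exp (K * r'))) α₀ α₁
  · have hw' : w.re < Real.log r := hw.trans_lt (Real.log_lt_log hr' hr'r)
    have hφw := (hφ.differentiableAt
      ((isOpen_lt continuous_re continuous_const).mem_nhds hw')).hasDerivAt
    convert hφw.fun_sub ((((hasDerivAt_id' w).const_mul (1 + res)).cexp).const_mul (c / (1 + res)))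
      using 1
    rw [hc w hw', Complex.exp_add]
    field_simp
  · calc ‖c * cexp ((1 + res) * w) * (cexp (k (cexp w)) - 1)‖
        = ‖c‖ * Real.exp ((1 + res) * w).re * ‖cexp (k (cexp w)) - 1‖ := by
          rw [norm_mul, norm_mul, norm_exp]
      _ ≤ ‖c‖ * Real.exp ((1 + res) * w).re * (K * Real.exp (K * r') * Real.exp w.re) := by
          gcongr; exact norm_cexp_comp_cexp_sub_one_le hr' hK hkK hw
      _ = ‖c‖ * (K * Real.exp (K * r')) * Real.exp ((2 + res) * w).re := by
          rw [show (2 + res) * w = (1 + res) * w + w by ring, add_re, Real.exp_add]; ring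

/-- Asymptotics (integrated form) of a straightening chart near an unbounded singularity,
in the logarithmic coordinate: if `φ̂″/φ̂′ = (1 + res) + eᵛ h(eᵛ)` on the half plane
`Re v < log r` with `Re res < -1`, then there is `b ≠ 0` such that, on every region
`Re v ≤ log r'`, `α₀ < Im((1+res)v) < α₁`, one has
`|φ̂(v) − b e^{(1+res)v}| ≤ max(1, e^{Re((2+res)v)})·(C′ + C·max(0, Re((1+res)v)))`. -/
theorem straightening_chart_asymptotics
    (res : ℂ) (hres : res.re < -1) (r : ℝ) (hr : 0 < r)
    (h : ℂ → ℂ) (hh : DifferentiableOn ℂ h (ball 0 r))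
    (hbdd : ∃ M : ℝ, ∀ z ∈ ball (0 : ℂ) r, ‖h z‖ ≤ M)
    (φ : ℂ → ℂ)
    (hφ : DifferentiableOn ℂ φ {v : ℂ | v.re < Real.log r})
    (hφ' : ∀ v : ℂ, v.re < Real.log r → deriv φ v ≠ 0)
    (heq : ∀ v : ℂ, v.re < Real.log r →
      deriv (deriv φ) v / deriv φ v = (1 + res) + Complex.exp v * h (Complex.exp v)) :
    ∃ b : ℂ, b ≠ 0 ∧
      ∀ α₀ α₁ : ℝ, α₀ < α₁ → ∀ r' : ℝ, 0 < r' → r' < r →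
        ∃ C C' : ℝ, 0 ≤ C ∧ 0 ≤ C' ∧
          ∀ v : ℂ, v.re ≤ Real.log r' →
            α₀ < ((1 + res) * v).im → ((1 + res) * v).im < α₁ →
            ‖φ v - b * Complex.exp ((1 + res) * v)‖ ≤
              max 1 (Real.exp (((2 + res) * v).re)) *
                (C' + C * max 0 (((1 + res) * v).re)) :=
  straightening_chart_asymptotics_general res hres r hr h hh φ hφ hφ' heq
end

section
/- Stability of the homotopy class under small perturbations fixing endpoints (Lemma GammaTop2): Let U ⊆ ℂ be open and let γ be an admissible path in U. Then there exists ε > 0 such that every admissible path γ̃ in U with γ̃(0) = γ(0), γ̃(1) = γ(1) and d(γ, γ̃) < ε is 𝒢-homotopic to γ. -/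
/-!
Let `p = γ 1`. By compactness some `ε₀ > 0` has `B(γ s, ε₀) ⊆ U` for all `s`; by continuity the
tail `γ [a, 1]` lies in `B(p, ε₀ / 2)` for some `a < 1`; and `γ [0, a]` keeps a distance `m > 0`
from `p`. Take `ε = min (ε₀ / 2) m`.

Every path `δ` whose tail `δ [a, 1]` lies in `B(δ 1, r) ⊆ U` is 𝒢-homotopic to its truncation,
which follows `δ` up to time `a` and then runs straight to `δ 1`: first pull the tail towards
`δ 1`, then slide the breaking point back to `a`. Both homotopies move points along segments
towards `δ 1` inside the disk, so they avoid `δ 1` before time `1`. Finally, for `γ'` with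
`d(γ, γ') < ε`, the straight-line homotopy between the truncations of `γ` and `γ'` stays within
`ε ≤ m` of `γ` on `[0, a]` and on the tail consists of segments from `[γ a, γ' a] ⊆ B(p, ε₀)`
to `p`.
-/

open Set

/-- A path in `U` parametrized by `[0,1]` is admissible if it is continuous, takes values
in `U`, and hits its endpoint only at time `1`. -/
def IsAdmissible (U : Set ℂ) (γ : ℝ → ℂ) : Prop :=
  ContinuousOn γ (Set.Icc 0 1) ∧ (∀ s ∈ Set.Icc (0:ℝ) 1, γ s ∈ U) ∧
    ∀ s ∈ Set.Ico (0:ℝ) 1, γ s ≠ γ 1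

/-- Two admissible paths with the same endpoints are 𝒢-homotopic: there is a homotopy
in `U` fixing the endpoints and avoiding the common endpoint `γ 1` at all times `s < 1`. -/
def GHomotopic (U : Set ℂ) (γ γ' : ℝ → ℂ) : Prop :=
  ∃ H : ℝ → ℝ → ℂ,
    ContinuousOn (fun p : ℝ × ℝ => H p.1 p.2) (Set.Icc 0 1 ×ˢ Set.Icc 0 1) ∧
    (∀ s ∈ Set.Icc (0:ℝ) 1, ∀ u ∈ Set.Icc (0:ℝ) 1, H s u ∈ U) ∧
    (∀ s ∈ Set.Icc (0:ℝ) 1, H s 0 = γ s) ∧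
    (∀ s ∈ Set.Icc (0:ℝ) 1, H s 1 = γ' s) ∧
    (∀ u ∈ Set.Icc (0:ℝ) 1, H 0 u = γ 0) ∧
    (∀ u ∈ Set.Icc (0:ℝ) 1, H 1 u = γ 1) ∧
    (∀ s ∈ Set.Ico (0:ℝ) 1, ∀ u ∈ Set.Icc (0:ℝ) 1, H s u ≠ γ 1)

/-- The sup distance between two paths parametrized by `[0,1]`. -/
noncomputable def pathDist (γ γ' : ℝ → ℂ) : ℝ :=
  sSup ((fun s => ‖γ' s - γ s‖) '' Set.Icc 0 1)

open Metric AffineMap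

namespace GHomotopic

variable {U : Set ℂ} {γ₁ γ₂ γ₃ : ℝ → ℂ}

theorem source_eq (h : GHomotopic U γ₁ γ₂) : γ₂ 0 = γ₁ 0 := by
  obtain ⟨H, -, -, -, h1, hl, -, -⟩ := h
  rw [← h1 0 (left_mem_Icc.2 zero_le_one), hl 1 (right_mem_Icc.2 zero_le_one)]

theorem target_eq (h : GHomotopic U γ₁ γ₂) : γ₂ 1 = γ₁ 1 := by
  obtain ⟨H, -, -, -, h1, -, hr, -⟩ := h
  rw [← h1 1 (right_mem_Icc.2 zero_le_one), hr 1 (right_mem_Icc.2 zero_le_one)]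

theorem symm (h : GHomotopic U γ₁ γ₂) : GHomotopic U γ₂ γ₁ := by
  have h₀ := h.source_eq
  have h₁ := h.target_eq
  obtain ⟨H, hH, hU, hs0, hs1, hl, hr, hne⟩ := h
  have hflip : ∀ u ∈ Icc (0:ℝ) 1, 1 - u ∈ Icc (0:ℝ) 1 := fun u hu =>
    ⟨by linarith [hu.2], by linarith [hu.1]⟩
  refine ⟨fun s u => H s (1 - u),
    hH.comp (by fun_prop : Continuous fun q : ℝ × ℝ => (q.1, 1 - q.2)).continuousOn ?_,
    fun s hs u hu => hU s hs _ (hflip u hu), fun s hs => by simpa using hs1 s hs,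
    fun s hs => by simpa using hs0 s hs,
    fun u hu => h₀ ▸ hl _ (hflip u hu), fun u hu => h₁ ▸ hr _ (hflip u hu),
    fun s hs u hu => h₁ ▸ hne s hs _ (hflip u hu)⟩
  rintro ⟨s, u⟩ ⟨hs, hu⟩
  exact ⟨hs, hflip u hu⟩

theorem trans (h : GHomotopic U γ₁ γ₂) (h' : GHomotopic U γ₂ γ₃) : GHomotopic U γ₁ γ₃ := by
  have h₀ := h.source_eq
  have h₁ := h.target_eq
  obtain ⟨H, hH, hU, hs0, hs1, hl, hr, hne⟩ := h
  obtain ⟨K, hK, kU, ks0, ks1, kl, kr, kne⟩ := h'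
  have hlow : ∀ u ∈ Icc (0:ℝ) 1, u ≤ 1 / 2 → 2 * u ∈ Icc (0:ℝ) 1 := fun u hu h2 =>
    ⟨by linarith [hu.1], by linarith⟩
  have hhigh : ∀ u ∈ Icc (0:ℝ) 1, ¬u ≤ 1 / 2 → 2 * u - 1 ∈ Icc (0:ℝ) 1 := fun u hu h2 =>
    ⟨by linarith [not_le.1 h2], by linarith [hu.2]⟩
  refine ⟨fun s u => if u ≤ 1 / 2 then H s (2 * u) else K s (2 * u - 1), ?_, ?_, ?_, ?_, ?_, ?_, ?_⟩
  · set S := Icc (0:ℝ) 1 ×ˢ Icc (0:ℝ) 1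
    have hS : IsClosed S := isClosed_Icc.prod isClosed_Icc
    have hlower : ContinuousOn (fun q : ℝ × ℝ => H q.1 (2 * q.2)) (S ∩ {q | q.2 ≤ 1 / 2}) :=
      hH.comp (by fun_prop : Continuous fun q : ℝ × ℝ => (q.1, 2 * q.2)).continuousOn
        fun q hq => ⟨hq.1.1, hlow _ hq.1.2 hq.2⟩
    have hupper : ContinuousOn (fun q : ℝ × ℝ => K q.1 (2 * q.2 - 1)) (S ∩ {q | 1 / 2 ≤ q.2}) := by
      refine hK.comp (by fun_prop : Continuous fun q : ℝ × ℝ => (q.1, 2 * q.2 - 1)).continuousOn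
        fun q ⟨hqS, (h2 : 1 / 2 ≤ q.2)⟩ => ⟨hqS.1, by linarith, by linarith [hqS.2.2]⟩
    refine ContinuousOn.mono (s := (S ∩ {q | q.2 ≤ 1 / 2}) ∪ (S ∩ {q | 1 / 2 ≤ q.2}))
      (.union_of_isClosed (hlower.congr fun q hq => if_pos hq.2) (hupper.congr fun q hq => ?_)
        (hS.inter (isClosed_le continuous_snd continuous_const))
        (hS.inter (isClosed_le continuous_const continuous_snd))) fun q hq => ?_
    · dsimp only
      split_ifs with h2
      · rw [show q.2 = 1 / 2 from le_antisymm h2 hq.2]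
        norm_num [hs1 q.1 hq.1.1, ks0 q.1 hq.1.1]
      · rfl
    · rcases le_total q.2 (1 / 2) with h2 | h2
      exacts [Or.inl ⟨hq, h2⟩, Or.inr ⟨hq, h2⟩]
  · intro s hs u hu
    dsimp only
    split_ifs with h2
    exacts [hU s hs _ (hlow u hu h2), kU s hs _ (hhigh u hu h2)]
  · intro s hs
    simp [hs0 s hs]
  · intro s hs
    norm_num [ks1 s hs]
  · intro u hu
    dsimp only
    split_ifs with h2
    exacts [hl _ (hlow u hu h2), h₀ ▸ kl _ (hhigh u hu h2)]
  · intro u hu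
    dsimp only
    split_ifs with h2
    exacts [hr _ (hlow u hu h2), h₁ ▸ kr _ (hhigh u hu h2)]
  · intro s hs u hu
    dsimp only
    split_ifs with h2
    exacts [hne s hs _ (hlow u hu h2), h₁ ▸ kne s hs _ (hhigh u hu h2)]

end GHomotopic

/-- Witnessed by the homotopy `(s, u) ↦ lineMap (x s u) p (τ s u)`. -/
theorem GHomotopic.of_lineMap {U : Set ℂ} {p : ℂ} {r : ℝ} {x : ℝ → ℝ → ℂ} {τ : ℝ → ℝ → ℝ}
    (hball : ball p r ⊆ U)
    (hx : ContinuousOn (fun q : ℝ × ℝ => x q.1 q.2) (Icc 0 1 ×ˢ Icc 0 1))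
    (hτ : ContinuousOn (fun q : ℝ × ℝ => τ q.1 q.2) (Icc 0 1 ×ˢ Icc 0 1))
    (hτ_mem : ∀ s ∈ Icc (0:ℝ) 1, ∀ u ∈ Icc (0:ℝ) 1, τ s u ∈ Icc 0 1)
    (hxU : ∀ s ∈ Icc (0:ℝ) 1, ∀ u ∈ Icc (0:ℝ) 1, x s u ∈ U)
    (hx_ball : ∀ s ∈ Icc (0:ℝ) 1, ∀ u ∈ Icc (0:ℝ) 1, τ s u ≠ 0 → x s u ∈ ball p r)
    (hx_ne : ∀ s ∈ Ico (0:ℝ) 1, ∀ u ∈ Icc (0:ℝ) 1, x s u ≠ p ∧ τ s u ≠ 1)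
    (h_source : ∀ u ∈ Icc (0:ℝ) 1, x 0 u = x 0 0 ∧ τ 0 u = 0)
    (h_target : ∀ u ∈ Icc (0:ℝ) 1, x 1 u = p ∨ τ 1 u = 1) :
    GHomotopic U (fun s => lineMap (x s 0) p (τ s 0)) (fun s => lineMap (x s 1) p (τ s 1)) := by
  have h01 : (0:ℝ) ∈ Icc (0:ℝ) 1 := left_mem_Icc.2 zero_le_one
  have htarget : ∀ u ∈ Icc (0:ℝ) 1, lineMap (x 1 u) p (τ 1 u) = p := fun u hu =>
    lineMap_eq_right_iff.2 (h_target u hu)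
  refine ⟨fun s u => lineMap (x s u) p (τ s u), hx.lineMap continuousOn_const hτ,
    fun s hs u hu => ?_, fun s _ => rfl, fun s _ => rfl, fun u hu => ?_, fun u hu => ?_,
    fun s hs u hu => ?_⟩
  · by_cases h0 : τ s u = 0
    · simpa [h0] using hxU s hs u hu
    · have hxb := hx_ball s hs u hu h0
      exact hball ((convex_ball p r).lineMap_mem hxb
        (mem_ball_self (pos_of_mem_ball hxb)) (hτ_mem s hs u hu))
  · simp only [(h_source u hu).1, (h_source u hu).2, (h_source 0 h01).2]
  · simp only [htarget u hu, htarget 0 h01]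
  · simp only [htarget 0 h01, ne_eq, lineMap_eq_right_iff, not_or]
    exact hx_ne s hs u hu

noncomputable def tailRamp (a s : ℝ) : ℝ := max 0 (s - a) / (1 - a)

section tailRamp

variable {a s : ℝ}

theorem continuous_tailRamp (a : ℝ) : Continuous (tailRamp a) := by
  unfold tailRamp
  fun_prop

theorem tailRamp_of_le (h : s ≤ a) : tailRamp a s = 0 := by
  simp [tailRamp, h]

theorem tailRamp_one (ha : a < 1) : tailRamp a 1 = 1 := by
  rw [tailRamp, max_eq_right (by linarith), div_self (by linarith)]

theorem tailRamp_mem_Icc (ha : a < 1) (hs : s ≤ 1) : tailRamp a s ∈ Icc 0 1 :=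
  ⟨div_nonneg (le_max_left _ _) (by linarith),
    (div_le_one (by linarith)).2 (max_le (by linarith) (by linarith))⟩

theorem tailRamp_lt_one (ha : a < 1) (hs : s < 1) : tailRamp a s < 1 :=
  (div_lt_one (by linarith)).2 (max_lt (by linarith) (by linarith))

end tailRamp

noncomputable def truncatePath (δ : ℝ → ℂ) (a : ℝ) (s : ℝ) : ℂ :=
  lineMap (δ (min s a)) (δ 1) (tailRamp a s)

section tail

variable {U : Set ℂ} {δ : ℝ → ℂ} {a r : ℝ}

theorem GHomotopic.pullToEnd (hδ : IsAdmissible U δ) (ha : a ∈ Ico 0 1)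
    (hball : ball (δ 1) r ⊆ U) (htail : ∀ s ∈ Icc a 1, δ s ∈ ball (δ 1) r) :
    GHomotopic U δ (fun s => lineMap (δ s) (δ 1) (tailRamp a s)) := by
  have key := GHomotopic.of_lineMap (x := fun s _ => δ s) (τ := fun s u => u * tailRamp a s)
    hball (hδ.1.comp continuous_fst.continuousOn fun q hq => hq.1)
    (continuous_snd.mul ((continuous_tailRamp a).comp continuous_fst)).continuousOn
    (fun s hs u hu => ?_) (fun s hs _ _ => hδ.2.1 s hs) (fun s hs u _ h => ?_)
    (fun s hs u hu => ⟨hδ.2.2 s hs, ?_⟩) (fun u _ => ⟨rfl, by simp [tailRamp_of_le ha.1]⟩)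
    (fun _ _ => Or.inl rfl)
  · simpa using key
  · have ht := tailRamp_mem_Icc ha.2 hs.2
    exact ⟨mul_nonneg hu.1 ht.1, mul_le_one₀ hu.2 ht.1 ht.2⟩
  · refine htail s ⟨le_of_lt (not_le.1 fun hsa => h ?_), hs.2⟩
    simp [tailRamp_of_le hsa]
  · exact (mul_lt_one_of_nonneg_of_lt_one_right hu.2 (tailRamp_mem_Icc ha.2 hs.2.le).1
      (tailRamp_lt_one ha.2 hs.2)).ne

theorem GHomotopic.slideToTruncatePath (hδ : IsAdmissible U δ) (ha : a ∈ Ico 0 1)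
    (hball : ball (δ 1) r ⊆ U) (htail : ∀ s ∈ Icc a 1, δ s ∈ ball (δ 1) r) :
    GHomotopic U (fun s => lineMap (δ s) (δ 1) (tailRamp a s)) (truncatePath δ a) := by
  set σ : ℝ → ℝ → ℝ := fun s u => s - u * (s - min s a)
  have hσ : ∀ s ∈ Icc (0:ℝ) 1, ∀ u ∈ Icc (0:ℝ) 1, min s a ≤ σ s u ∧ σ s u ≤ s := by
    intro s _ u hu
    have hd : 0 ≤ s - min s a := sub_nonneg.2 (min_le_left s a)
    exact ⟨by nlinarith [hu.2], by nlinarith [hu.1]⟩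
  have hσ_mem : ∀ s ∈ Icc (0:ℝ) 1, ∀ u ∈ Icc (0:ℝ) 1, σ s u ∈ Icc 0 1 := fun s hs u hu =>
    ⟨(le_min hs.1 ha.1).trans (hσ s hs u hu).1, (hσ s hs u hu).2.trans hs.2⟩
  have key := GHomotopic.of_lineMap (x := fun s u => δ (σ s u)) (τ := fun s _ => tailRamp a s)
    hball (hδ.1.comp (by fun_prop) fun q hq => hσ_mem q.1 hq.1 q.2 hq.2)
    ((continuous_tailRamp a).comp continuous_fst).continuousOn
    (fun s hs _ _ => tailRamp_mem_Icc ha.2 hs.2) (fun s hs u hu => hδ.2.1 _ (hσ_mem s hs u hu))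
    (fun s hs u hu h => ?_)
    (fun s hs u hu => ⟨hδ.2.2 _ ⟨(hσ_mem s ⟨hs.1, hs.2.le⟩ u hu).1,
      ((hσ s ⟨hs.1, hs.2.le⟩ u hu).2.trans_lt hs.2)⟩, (tailRamp_lt_one ha.2 hs.2).ne⟩)
    (fun u _ => ⟨by simp [σ, ha.1], tailRamp_of_le ha.1⟩)
    (fun _ _ => Or.inr (tailRamp_one ha.2))
  · unfold truncatePath
    simpa [σ] using key
  · have has : a < s := not_le.1 fun hsa => h (tailRamp_of_le hsa)
    refine htail _ ⟨?_, (hσ_mem s hs u hu).2⟩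
    simpa [min_eq_right has.le] using (hσ s hs u hu).1

theorem GHomotopic.truncatePath_of_tail (hδ : IsAdmissible U δ) (ha : a ∈ Ico 0 1)
    (hball : ball (δ 1) r ⊆ U) (htail : ∀ s ∈ Icc a 1, δ s ∈ ball (δ 1) r) :
    GHomotopic U δ (truncatePath δ a) :=
  (pullToEnd hδ ha hball htail).trans (slideToTruncatePath hδ ha hball htail)

end tail

theorem GHomotopic.truncatePath_truncatePath {U : Set ℂ} {γ γ' : ℝ → ℂ} {a r : ℝ}
    (hγ : ContinuousOn γ (Icc 0 1)) (hγ' : ContinuousOn γ' (Icc 0 1))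
    (h0 : γ' 0 = γ 0) (h1 : γ' 1 = γ 1) (ha : a ∈ Ico 0 1) (hball : ball (γ 1) r ⊆ U)
    (hγa : γ a ∈ ball (γ 1) r) (hγ'a : γ' a ∈ ball (γ 1) r)
    (hseg : ∀ s ∈ Icc 0 a, ∀ u ∈ Icc (0:ℝ) 1, lineMap (γ s) (γ' s) u ∈ U \ {γ 1}) :
    GHomotopic U (truncatePath γ a) (truncatePath γ' a) := by
  have hmin : ∀ s ∈ Icc (0:ℝ) 1, min s a ∈ Icc 0 a := fun s hs =>
    ⟨le_min hs.1 ha.1, min_le_right s a⟩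
  have hmin' : MapsTo (fun q : ℝ × ℝ => min q.1 a) (Icc 0 1 ×ˢ Icc 0 1) (Icc 0 1) :=
    fun q hq => Icc_subset_Icc_right ha.2.le (hmin q.1 hq.1)
  have key := GHomotopic.of_lineMap
    (x := fun s u => lineMap (γ (min s a)) (γ' (min s a)) u) (τ := fun s _ => tailRamp a s) hball
    ((hγ.comp (by fun_prop) hmin').lineMap (hγ'.comp (by fun_prop) hmin')
      continuous_snd.continuousOn)
    ((continuous_tailRamp a).comp continuous_fst).continuousOn
    (fun s hs _ _ => tailRamp_mem_Icc ha.2 hs.2) (fun s hs u hu => (hseg _ (hmin s hs) u hu).1)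
    (fun s hs u hu h => ?_)
    (fun s hs u hu => ⟨(hseg _ (hmin s ⟨hs.1, hs.2.le⟩) u hu).2, (tailRamp_lt_one ha.2 hs.2).ne⟩)
    (fun u _ => ⟨by simp [ha.1, h0], tailRamp_of_le ha.1⟩)
    (fun _ _ => Or.inr (tailRamp_one ha.2))
  · unfold truncatePath
    simpa [h1] using key
  · rw [min_eq_right (not_le.1 fun hsa => h (tailRamp_of_le hsa)).le]
    exact (convex_ball _ _).lineMap_mem hγa hγ'a hu

theorem lineMap_mem_diff_singleton {E : Type*} [NormedAddCommGroup E] [NormedSpace ℝ E]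
    {U : Set E} {x y p : E} {ε u : ℝ} (hU : ball x ε ⊆ U) (hxy : dist y x < ε)
    (hp : ε ≤ dist x p) (hu : u ∈ Icc (0:ℝ) 1) : lineMap x y u ∈ U \ {p} := by
  have hclose : dist (lineMap x y u) x < ε := by
    rw [dist_lineMap_left, Real.norm_of_nonneg hu.1, dist_comm]
    exact (mul_le_of_le_one_left dist_nonneg hu.2).trans_lt hxy
  refine ⟨hU hclose, fun hlp => ?_⟩
  rw [mem_singleton_iff.1 hlp, dist_comm] at hclose
  linarith

theorem dist_le_pathDist {γ γ' : ℝ → ℂ} (hγ : ContinuousOn γ (Icc 0 1))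
    (hγ' : ContinuousOn γ' (Icc 0 1)) {s : ℝ} (hs : s ∈ Icc (0:ℝ) 1) :
    dist (γ' s) (γ s) ≤ pathDist γ γ' :=
  le_csSup (isCompact_Icc.image_of_continuousOn (hγ'.sub hγ).norm).bddAbove
    ⟨s, hs, (dist_eq_norm _ _).symm⟩

theorem exists_forall_Icc_dist_lt {α : Type*} [PseudoMetricSpace α] {f : ℝ → α}
    (hf : ContinuousWithinAt f (Icc 0 1) 1) {r : ℝ} (hr : 0 < r) :
    ∃ a ∈ Ico (0:ℝ) 1, ∀ s ∈ Icc a 1, dist (f s) (f 1) < r := by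
  rw [ContinuousWithinAt, nhdsWithin_Icc_eq_nhdsLE zero_lt_one] at hf
  obtain ⟨l, hl, hsub⟩ := mem_nhdsLE_iff_exists_Icc_subset.1 (hf (ball_mem_nhds _ hr))
  exact ⟨max 0 l, ⟨le_max_left _ _, max_lt zero_lt_one hl⟩,
    fun s hs => hsub ⟨(le_max_right _ _).trans hs.1, hs.2⟩⟩

theorem IsAdmissible.exists_ball_tail_margin {U : Set ℂ} {γ : ℝ → ℂ} (hU : IsOpen U)
    (hγ : IsAdmissible U γ) :
    ∃ ε₀ > (0:ℝ), ∃ a ∈ Ico (0:ℝ) 1, ∃ m > (0:ℝ), (∀ s ∈ Icc (0:ℝ) 1, ball (γ s) ε₀ ⊆ U) ∧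
      (∀ s ∈ Icc a 1, dist (γ s) (γ 1) < ε₀ / 2) ∧ ∀ s ∈ Icc 0 a, m ≤ dist (γ s) (γ 1) := by
  obtain ⟨ε₀, hε₀, hthick⟩ := IsCompact.exists_thickening_subset_open
    (isCompact_Icc.image_of_continuousOn hγ.1) hU (image_subset_iff.2 hγ.2.1)
  obtain ⟨a, ha, htail⟩ :=
    exists_forall_Icc_dist_lt (hγ.1 1 (right_mem_Icc.2 zero_le_one)) (half_pos hε₀)
  obtain ⟨m, hm, hmargin⟩ := isCompact_Icc.exists_forall_le'
    (continuous_dist.comp_continuousOn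
      ((hγ.1.mono (Icc_subset_Icc_right ha.2.le)).prodMk continuousOn_const))
    fun s hs => dist_pos.2 (hγ.2.2 s ⟨hs.1, hs.2.trans_lt ha.2⟩)
  exact ⟨ε₀, hε₀, a, ha, m, hm,
    fun s hs => (ball_subset_thickening (mem_image_of_mem γ hs) ε₀).trans hthick, htail, hmargin⟩

/-- Lemma GammaTop2: stability of the homotopy class under small perturbations fixing
the endpoints. -/
theorem homotopy_class_stable (U : Set ℂ) (hU : IsOpen U)
    (γ : ℝ → ℂ) (hγ : IsAdmissible U γ) :
    ∃ ε > (0:ℝ), ∀ γ' : ℝ → ℂ, IsAdmissible U γ' → γ' 0 = γ 0 → γ' 1 = γ 1 →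
      pathDist γ γ' < ε → GHomotopic U γ γ' := by
  obtain ⟨ε₀, hε₀, a, ha, m, hm, hball, htail, hmargin⟩ := hγ.exists_ball_tail_margin hU
  refine ⟨min (ε₀ / 2) m, lt_min (half_pos hε₀) hm, fun γ' hγ' h0' h1' hd => ?_⟩
  have h1 : (1:ℝ) ∈ Icc (0:ℝ) 1 := right_mem_Icc.2 zero_le_one
  have hIcc : ∀ s ∈ Icc 0 a, s ∈ Icc (0:ℝ) 1 := fun s hs => ⟨hs.1, hs.2.trans ha.2.le⟩
  have hclose : ∀ s ∈ Icc (0:ℝ) 1, dist (γ' s) (γ s) < min (ε₀ / 2) m := fun s hs =>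
    (dist_le_pathDist hγ.1 hγ'.1 hs).trans_lt hd
  have htail₀ : ∀ s ∈ Icc a 1, γ s ∈ ball (γ 1) ε₀ := fun s hs =>
    ball_subset_ball (half_le_self hε₀.le) (htail s hs)
  have htail' : ∀ s ∈ Icc a 1, γ' s ∈ ball (γ 1) ε₀ := fun s hs => by
    rw [mem_ball]
    have := dist_triangle (γ' s) (γ s) (γ 1)
    linarith [htail s hs, hclose s ⟨ha.1.trans hs.1, hs.2⟩, min_le_left (ε₀ / 2) m]
  have hseg : ∀ s ∈ Icc 0 a, ∀ u ∈ Icc (0:ℝ) 1, lineMap (γ s) (γ' s) u ∈ U \ {γ 1} :=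
    fun s hs _ hu => lineMap_mem_diff_singleton
      ((ball_subset_ball ((min_le_left _ _).trans (half_le_self hε₀.le))).trans
        (hball s (hIcc s hs)))
      (hclose s (hIcc s hs)) ((min_le_right _ _).trans (hmargin s hs)) hu
  exact (GHomotopic.truncatePath_of_tail hγ ha (hball 1 h1) htail₀).trans
    ((GHomotopic.truncatePath_truncatePath hγ.1 hγ'.1 h0' h1' ha (hball 1 h1)
      (htail₀ a ⟨le_rfl, ha.2.le⟩) (htail' a ⟨le_rfl, ha.2.le⟩) hseg).trans
    (GHomotopic.truncatePath_of_tail hγ' ha (h1' ▸ hball 1 h1) (h1' ▸ htail')).symm)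
end

section
/- Prepending a small loop stays in the ε-neighbourhood of the class (Lemma GammaTop1): Let U ⊆ ℂ be open, let γ be an admissible path in U with z₀ = γ(0) and z₁ = γ(1). Let ε > 0 be such that B(z₀,ε) ⊆ U, and let δ : [0,1] → B(z₀,ε) be continuous with δ(1) = z₀ and δ(s) ≠ z₁ for all s ∈ [0,1]. Then the concatenation δ·γ (which is an admissible path in U from δ(0) to z₁) is 𝒢-homotopic to some admissible path γ̃ in U with d(γ, γ̃) < ε. -/
open Set

/-- Concatenation of two paths parametrized by `[0,1]`: traverse `δ`, then `γ`. -/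
noncomputable def pathConcat (δ γ : ℝ → ℂ) : ℝ → ℂ :=
  fun s => if s ≤ 1/2 then δ (2*s) else γ (2*s - 1)

/-!
Reparametrize `δ·γ` so that the loop `δ` is traversed during a short time `[0, η]`; call the
result `γ'`. The straight-line homotopy between the identity of `[0,1]` and this
reparametrization keeps every time `s < 1` in the convex set `[0,1)`, so it is a 𝒢-homotopy from
`δ·γ` to `γ'`. By compactness `δ` stays in a ball `B(γ 0, r)` with `r < ε`; choosing `η` so small
that `γ [0, η] ⊆ B(γ 0, ε - r)` makes `γ'` `ε`-close to `γ` on `[0, η]`, and on `[η, 1]` the path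
`γ'` is `γ` delayed by at most `η`, hence close to `γ` by uniform continuity.
-/

open Metric

section Concat

variable {δ γ : ℝ → ℂ}

@[simp] theorem pathConcat_zero : pathConcat δ γ 0 = δ 0 := by norm_num [pathConcat]

@[simp] theorem pathConcat_one : pathConcat δ γ 1 = γ 1 := by norm_num [pathConcat]

theorem continuousOn_pathConcat (hδ : ContinuousOn δ (Icc 0 1)) (hγ : ContinuousOn γ (Icc 0 1))
    (hδγ : δ 1 = γ 0) : ContinuousOn (pathConcat δ γ) (Icc 0 1) := by
  have hleft : ContinuousOn (pathConcat δ γ) (Icc 0 (1 / 2)) := by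
    refine (hδ.comp (f := fun s => 2 * s) (by fun_prop) fun s hs => ?_).congr
      fun s hs => if_pos hs.2
    exact ⟨by linarith [hs.1], by linarith [hs.2]⟩
  have hright : ContinuousOn (pathConcat δ γ) (Icc (1 / 2) 1) := by
    refine (hγ.comp (f := fun s => 2 * s - 1) (by fun_prop) fun s hs => ?_).congr fun s hs => ?_
    · exact ⟨by linarith [hs.1], by linarith [hs.2]⟩
    · rcases hs.1.eq_or_lt with rfl | hs'
      · norm_num [pathConcat, hδγ]
      · exact if_neg hs'.not_ge
  rw [← Icc_union_Icc_eq_Icc (by norm_num : (0 : ℝ) ≤ 1 / 2) (by norm_num : (1 / 2 : ℝ) ≤ 1)]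
  exact hleft.union_of_isClosed hright isClosed_Icc isClosed_Icc

theorem IsAdmissible.prepend {U : Set ℂ} (hγ : IsAdmissible U γ) (hδ : ContinuousOn δ (Icc 0 1))
    (hδU : ∀ s ∈ Icc (0 : ℝ) 1, δ s ∈ U) (hδγ : δ 1 = γ 0)
    (hδne : ∀ s ∈ Icc (0 : ℝ) 1, δ s ≠ γ 1) : IsAdmissible U (pathConcat δ γ) := by
  obtain ⟨hγc, hγU, hγne⟩ := hγ
  refine ⟨continuousOn_pathConcat hδ hγc hδγ, fun s hs => ?_, fun s hs => ?_⟩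
  · unfold pathConcat
    split_ifs with h
    · exact hδU _ ⟨by linarith [hs.1], by linarith⟩
    · exact hγU _ ⟨by linarith, by linarith [hs.2]⟩
  · rw [pathConcat_one]
    unfold pathConcat
    split_ifs with h
    · exact hδne _ ⟨by linarith [hs.1], by linarith⟩
    · exact hγne _ ⟨by linarith, by linarith [hs.2]⟩

end Concat

structure IsAdmissibleReparam (φ : ℝ → ℝ) : Prop where
  continuousOn : ContinuousOn φ (Icc 0 1)
  mapsTo : MapsTo φ (Icc 0 1) (Icc 0 1)
  mapsTo_Ico : MapsTo φ (Ico 0 1) (Ico 0 1)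
  map_zero : φ 0 = 0
  map_one : φ 1 = 1

section Reparam

variable {U : Set ℂ} {c : ℝ → ℂ} {φ : ℝ → ℝ}

theorem IsAdmissible.comp (hc : IsAdmissible U c) (hφ : IsAdmissibleReparam φ) :
    IsAdmissible U (c ∘ φ) := by
  obtain ⟨hcont, hU, hne⟩ := hc
  refine ⟨hcont.comp hφ.continuousOn hφ.mapsTo, fun s hs => hU _ (hφ.mapsTo hs), fun s hs => ?_⟩
  simpa [hφ.map_one] using hne _ (hφ.mapsTo_Ico hs)

theorem IsAdmissible.gHomotopic_comp (hc : IsAdmissible U c) (hφ : IsAdmissibleReparam φ) :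
    GHomotopic U c (c ∘ φ) := by
  obtain ⟨hcont, hU, hne⟩ := hc
  set ψ : ℝ → ℝ → ℝ := fun s u => (1 - u) * s + u * φ s with hψ
  have hψIcc : ∀ s ∈ Icc (0 : ℝ) 1, ∀ u ∈ Icc (0 : ℝ) 1, ψ s u ∈ Icc 0 1 := fun s hs u hu =>
    convex_Icc 0 1 hs (hφ.mapsTo hs) (sub_nonneg.2 hu.2) hu.1 (sub_add_cancel 1 u)
  have hψIco : ∀ s ∈ Ico (0 : ℝ) 1, ∀ u ∈ Icc (0 : ℝ) 1, ψ s u ∈ Ico 0 1 := fun s hs u hu =>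
    convex_Ico 0 1 hs (hφ.mapsTo_Ico hs) (sub_nonneg.2 hu.2) hu.1 (sub_add_cancel 1 u)
  have hψcont : ContinuousOn (fun p : ℝ × ℝ => ψ p.1 p.2) (Icc 0 1 ×ˢ Icc 0 1) := by
    have hφfst : ContinuousOn (fun p : ℝ × ℝ => φ p.1) (Icc 0 1 ×ˢ Icc 0 1) :=
      hφ.continuousOn.comp continuousOn_fst fun p hp => hp.1
    exact ((continuousOn_const.sub continuousOn_snd).mul continuousOn_fst).add
      (continuousOn_snd.mul hφfst)
  refine ⟨fun s u => c (ψ s u), hcont.comp hψcont fun p hp => hψIcc _ hp.1 _ hp.2,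
    fun s hs u hu => hU _ (hψIcc s hs u hu), fun s _ => by simp [hψ], fun s _ => by simp [hψ],
    fun u _ => by simp [hψ, hφ.map_zero], fun u _ => by simp [hψ, hφ.map_one],
    fun s hs u hu => hne _ (hψIco s hs u hu)⟩

end Reparam

/-- `pathConcat δ γ ∘ loopReparam η` runs through `δ` during `[0, η]` and through `γ` after. -/
noncomputable def loopReparam (η s : ℝ) : ℝ :=
  if s ≤ η then s / (2 * η) else 1 / 2 + (s - η) / (2 * (1 - η))

section LoopReparam

variable {η s : ℝ}

theorem loopReparam_of_le (hs : s ≤ η) : loopReparam η s = s / (2 * η) := if_pos hs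

theorem loopReparam_of_lt (hs : η < s) :
    loopReparam η s = 1 / 2 + (s - η) / (2 * (1 - η)) := if_neg hs.not_ge

theorem loopReparam_le_half (hη : 0 < η) (hs : s ≤ η) : loopReparam η s ≤ 1 / 2 := by
  rw [loopReparam_of_le hs, div_le_iff₀ (by positivity)]
  linarith

theorem half_lt_loopReparam (hη : η < 1) (hs : η < s) : 1 / 2 < loopReparam η s := by
  rw [loopReparam_of_lt hs, lt_add_iff_pos_right]
  exact div_pos (by linarith) (by linarith)

theorem isAdmissibleReparam_loopReparam (hη0 : 0 < η) (hη1 : η < 1) :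
    IsAdmissibleReparam (loopReparam η) := by
  have hcont : Continuous (loopReparam η) :=
    Continuous.if_le (by fun_prop) (by fun_prop) continuous_id continuous_const fun s hs => by
      rw [hs]; field_simp; ring
  have hlower : ∀ s, 0 ≤ s → 0 ≤ loopReparam η s := fun s hs => by
    rcases le_or_gt s η with h | h
    · rw [loopReparam_of_le h]; positivity
    · linarith [half_lt_loopReparam hη1 h]
  have hupper : ∀ s, s ≤ 1 → loopReparam η s ≤ 1 ∧ (s < 1 → loopReparam η s < 1) := by
    intro s hs
    rcases le_or_gt s η with h | h
    · have := loopReparam_le_half hη0 h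
      constructor <;> intros <;> linarith
    · rw [loopReparam_of_lt h]
      constructor
      · rw [add_comm, ← le_sub_iff_add_le, div_le_iff₀ (by linarith)]; linarith
      · intro hs'
        rw [add_comm, ← lt_sub_iff_add_lt, div_lt_iff₀ (by linarith)]; linarith
  refine ⟨hcont.continuousOn, fun s hs => ⟨hlower s hs.1, (hupper s hs.2).1⟩,
    fun s hs => ⟨hlower s hs.1, (hupper s hs.2.le).2 hs.2⟩, ?_, ?_⟩
  · simp [loopReparam_of_le hη0.le]
  · rw [loopReparam_of_lt hη1, mul_comm, ← div_div, div_self (sub_pos.2 hη1).ne']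
    norm_num

variable {δ γ : ℝ → ℂ}

theorem pathConcat_loopReparam_of_le (hη : 0 < η) (hs : s ≤ η) :
    pathConcat δ γ (loopReparam η s) = δ (s / η) := by
  rw [pathConcat, if_pos (loopReparam_le_half hη hs), loopReparam_of_le hs]
  congr 1; field_simp

theorem pathConcat_loopReparam_of_lt (hη : η < 1) (hs : η < s) :
    pathConcat δ γ (loopReparam η s) = γ ((s - η) / (1 - η)) := by
  rw [pathConcat, if_neg (half_lt_loopReparam hη hs).not_ge, loopReparam_of_lt hs]
  congr 1; field_simp; ring

end LoopReparam

theorem dist_div_one_sub_le {η s : ℝ} (hη0 : 0 ≤ η) (hη1 : η < 1) (hηs : η ≤ s) (hs : s ≤ 1) :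
    dist ((s - η) / (1 - η)) s ≤ η := by
  have hpos : 0 < 1 - η := by linarith
  rw [Real.dist_eq, abs_le]
  constructor
  · rw [le_sub_iff_add_le, le_div_iff₀ hpos]; nlinarith [mul_nonneg (sub_nonneg.2 hηs) hη0]
  · rw [sub_le_iff_le_add, div_le_iff₀ hpos]; nlinarith [mul_nonneg (sub_nonneg.2 hs) hη0]

theorem pathDist_lt_of_forall_norm_sub_lt {γ γ' : ℝ → ℂ} {ε : ℝ} (hγ : ContinuousOn γ (Icc 0 1))
    (hγ' : ContinuousOn γ' (Icc 0 1)) (h : ∀ s ∈ Icc (0 : ℝ) 1, ‖γ' s - γ s‖ < ε) :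
    pathDist γ γ' < ε :=
  (isCompact_Icc.sSup_lt_iff_of_continuous (nonempty_Icc.2 zero_le_one)
    (hγ'.sub hγ).norm ε).2 h

theorem exists_loopReparam_norm_sub_lt {γ δ : ℝ → ℂ} {ε : ℝ} (hγ : ContinuousOn γ (Icc 0 1))
    (hδ : ContinuousOn δ (Icc 0 1)) (hδmem : ∀ s ∈ Icc (0 : ℝ) 1, δ s ∈ ball (γ 0) ε) :
    ∃ η, 0 < η ∧ η < 1 ∧
      ∀ s ∈ Icc (0 : ℝ) 1, ‖pathConcat δ γ (loopReparam η s) - γ s‖ < ε := by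
  have hε : 0 < ε := pos_of_mem_ball (hδmem 0 (left_mem_Icc.2 zero_le_one))
  obtain ⟨r, hrε, hr⟩ := exists_lt_subset_ball
    (isCompact_Icc.image_of_continuousOn hδ).isClosed (mapsTo_iff_image_subset.1 hδmem)
  obtain ⟨a, ha, hγa⟩ := Metric.continuousWithinAt_iff.1
    (hγ 0 (left_mem_Icc.2 zero_le_one)) (ε - r) (sub_pos.2 hrε)
  obtain ⟨d, hd, hγd⟩ := Metric.uniformContinuousOn_iff.1
    (isCompact_Icc.uniformContinuousOn_of_continuous hγ) ε hε
  set η := min (min a d) 1 / 2 with hη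
  have hη0 : 0 < η := by positivity
  have hηa : η < a := by linarith [min_le_left (min a d) 1, min_le_left a d]
  have hηd : η < d := by linarith [min_le_left (min a d) 1, min_le_right a d]
  have hη1 : η < 1 := by linarith [min_le_right (min a d) 1]
  refine ⟨η, hη0, hη1, fun s hs => ?_⟩
  rcases le_or_gt s η with hsη | hηs
  · have hloop : s / η ∈ Icc (0 : ℝ) 1 :=
      ⟨div_nonneg hs.1 hη0.le, (div_le_one hη0).2 hsη⟩
    have hγs : dist (γ s) (γ 0) < ε - r :=
      hγa hs (by rw [Real.dist_eq, sub_zero, abs_of_nonneg hs.1]; linarith)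
    rw [pathConcat_loopReparam_of_le hη0 hsη]
    calc ‖δ (s / η) - γ s‖ ≤ dist (δ (s / η)) (γ 0) + dist (γ s) (γ 0) := by
          rw [dist_eq_norm, dist_eq_norm, norm_sub_rev (γ s)]
          exact norm_sub_le_norm_sub_add_norm_sub _ _ _
      _ < r + (ε - r) := add_lt_add (hr (mem_image_of_mem δ hloop)) hγs
      _ = ε := by ring
  · have hshift : (s - η) / (1 - η) ∈ Icc (0 : ℝ) 1 :=
      ⟨div_nonneg (by linarith) (by linarith), (div_le_one (by linarith)).2 (by linarith [hs.2])⟩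
    rw [pathConcat_loopReparam_of_lt hη1 hηs, ← dist_eq_norm]
    exact hγd _ hshift _ hs ((dist_div_one_sub_le hη0.le hη1 hηs.le hs.2).trans_lt hηd)

theorem prepend_small_loop_general (U : Set ℂ)
    (γ : ℝ → ℂ) (hγ : IsAdmissible U γ)
    (ε : ℝ) (hball : Metric.ball (γ 0) ε ⊆ U)
    (δ : ℝ → ℂ) (hδc : ContinuousOn δ (Set.Icc 0 1))
    (hδmem : ∀ s ∈ Set.Icc (0:ℝ) 1, δ s ∈ Metric.ball (γ 0) ε)
    (hδ1 : δ 1 = γ 0) (hδne : ∀ s ∈ Set.Icc (0:ℝ) 1, δ s ≠ γ 1) :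
    IsAdmissible U (pathConcat δ γ) ∧
    pathConcat δ γ 0 = δ 0 ∧ pathConcat δ γ 1 = γ 1 ∧
    ∃ γ' : ℝ → ℂ, IsAdmissible U γ' ∧ pathDist γ γ' < ε ∧
      GHomotopic U (pathConcat δ γ) γ' := by
  have hc : IsAdmissible U (pathConcat δ γ) :=
    hγ.prepend hδc (fun s hs => hball (hδmem s hs)) hδ1 hδne
  obtain ⟨η, hη0, hη1, hclose⟩ := exists_loopReparam_norm_sub_lt hγ.1 hδc hδmem
  have hφ := isAdmissibleReparam_loopReparam hη0 hη1
  have hc' := hc.comp hφ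
  exact ⟨hc, pathConcat_zero, pathConcat_one, _, hc',
    pathDist_lt_of_forall_norm_sub_lt hγ.1 hc'.1 hclose, hc.gHomotopic_comp hφ⟩

/-- Lemma GammaTop1: prepending a small loop inside `B(γ 0, ε)` avoiding the endpoint
yields a path 𝒢-homotopic to a path at sup distance `< ε` from `γ`. -/
theorem prepend_small_loop (U : Set ℂ) (hU : IsOpen U)
    (γ : ℝ → ℂ) (hγ : IsAdmissible U γ)
    (ε : ℝ) (hε : 0 < ε) (hball : Metric.ball (γ 0) ε ⊆ U)
    (δ : ℝ → ℂ) (hδc : ContinuousOn δ (Set.Icc 0 1))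
    (hδmem : ∀ s ∈ Set.Icc (0:ℝ) 1, δ s ∈ Metric.ball (γ 0) ε)
    (hδ1 : δ 1 = γ 0) (hδne : ∀ s ∈ Set.Icc (0:ℝ) 1, δ s ≠ γ 1) :
    IsAdmissible U (pathConcat δ γ) ∧
    pathConcat δ γ 0 = δ 0 ∧ pathConcat δ γ 1 = γ 1 ∧
    ∃ γ' : ℝ → ℂ, IsAdmissible U γ' ∧ pathDist γ γ' < ε ∧
      GHomotopic U (pathConcat δ γ) γ' :=
  prepend_small_loop_general U γ hγ ε hball δ hδc hδmem hδ1 hδne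
end

section
/- Local L¹ convergence of the piecewise-constant square averages (Lemma mnm): Let μ : ℂ → ℂ be Lebesgue-measurable with essential supremum of |μ| strictly less than 1. For each integer n ≥ 1 define μₙ : ℂ → ℂ by: on each half-open square Q = [i/n,(i+1)/n) × [j/n,(j+1)/n) with integers −n² ≤ i,j ≤ n²−1 (these squares partition [−n,n)²), set μₙ equal to the constant n²·∫_Q μ dLeb, and set μₙ = 0 outside [−n,n)². Then for every compact subset S of ℂ, ∫_S |μₙ − μ| dLeb → 0 as n → ∞. -/
/-!
On the grid cell containing `z`, `μₙ z - μ z` is the average of `μ w - μ z`, and the cell lies in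
the ball of radius `2/n` about `z`, so `‖μₙ z - μ z‖ ≤ n² ∫_{‖v‖<2/n} ‖μ (v + z) - μ z‖ dv`.
Integrating over `S` and exchanging the integrals bounds `∫_S ‖μₙ - μ‖` by
`4π · sup_{‖v‖<2/n} ∫_S ‖μ (v + z) - μ z‖ dz`, which tends to `0` by the continuity of
translations in `L¹` (applied to `μ` cut off outside a neighbourhood of `S`).
-/

open MeasureTheory Filter Topology
open scoped ENNReal

/-- The piecewise-constant approximation of `μ` of step `1/n`: on each half-open square
`[i/n,(i+1)/n) × [j/n,(j+1)/n)` contained in `[-n,n)²` it is the average of `μ` over the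
square, and it vanishes outside `[-n,n)²`. -/
noncomputable def sqApprox (μ : ℂ → ℂ) (n : ℕ) (z : ℂ) : ℂ :=
  if -(n:ℝ) ≤ z.re ∧ z.re < n ∧ -(n:ℝ) ≤ z.im ∧ z.im < n then
    (n:ℂ)^2 * ∫ w in {w : ℂ | ⌊(n:ℝ) * w.re⌋ = ⌊(n:ℝ) * z.re⌋ ∧
      ⌊(n:ℝ) * w.im⌋ = ⌊(n:ℝ) * z.im⌋}, μ w
  else 0

theorem tendsto_lintegral_enorm_comp_add_sub {G E : Type*} [AddGroup G] [TopologicalSpace G]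
    [IsTopologicalAddGroup G] [MeasurableSpace G] [BorelSpace G] [NormedAddCommGroup E]
    (ν : Measure G) [IsLocallyFiniteMeasure ν] [ν.InnerRegularCompactLTTop] [ν.IsAddLeftInvariant]
    {f : G → E} (hf : Integrable f ν) :
    Tendsto (fun v => ∫⁻ x, ‖f (v + x) - f x‖ₑ ∂ν) (𝓝 0) (𝓝 0) := by
  have : Fact ((1 : ℝ≥0∞) ≠ ∞) := ⟨ENNReal.one_ne_top⟩
  set F : Lp E 1 ν := hf.toL1 f
  have hcont : Continuous fun v : G => DomAddAct.mk v +ᵥ F :=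
    DomAddAct.continuous_mk.vadd continuous_const
  have hedist : ∀ v, edist (DomAddAct.mk v +ᵥ F) F = ∫⁻ x, ‖f (v + x) - f x‖ₑ ∂ν := by
    intro v
    rw [Lp.edist_def, eLpNorm_one_eq_lintegral_enorm]
    refine lintegral_congr_ae ?_
    have htr : (fun x => F (v + x)) =ᵐ[ν] fun x => f (v + x) :=
      (measurePreserving_add_left ν v).quasiMeasurePreserving.ae_eq_comp hf.coeFn_toL1
    filter_upwards [DomAddAct.vadd_Lp_ae_eq (DomAddAct.mk v) F, htr, hf.coeFn_toL1]
      with x h1 h2 h3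
    rw [Pi.sub_apply, h1, h3]
    exact congrArg (‖· - f x‖ₑ) h2
  simpa [hedist] using (hcont.tendsto 0).edist (tendsto_const_nhds (x := F))

theorem tendsto_setLIntegral_enorm_comp_add_sub {G E : Type*} [NormedAddCommGroup G]
    [ProperSpace G] [MeasurableSpace G] [BorelSpace G] [NormedAddCommGroup E] (ν : Measure G)
    [IsLocallyFiniteMeasure ν] [ν.InnerRegularCompactLTTop] [ν.IsAddLeftInvariant]
    {f : G → E} (hf : LocallyIntegrable f ν) {S : Set G} (hS : IsCompact S) :
    Tendsto (fun v => ∫⁻ x in S, ‖f (v + x) - f x‖ₑ ∂ν) (𝓝 0) (𝓝 0) := by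
  set K := Metric.cthickening 1 S
  have hK : IsCompact K := hS.cthickening
  have hg : Integrable (K.indicator f) ν :=
    (integrable_indicator_iff hK.measurableSet).2 (hf.integrableOn_isCompact hK)
  refine tendsto_of_tendsto_of_tendsto_of_le_of_le' tendsto_const_nhds
    (tendsto_lintegral_enorm_comp_add_sub ν hg) (.of_forall fun _ => zero_le) ?_
  filter_upwards [Metric.closedBall_mem_nhds (0 : G) one_pos] with v hv
  refine (setLIntegral_mono' hS.measurableSet fun x hx => ?_).trans (setLIntegral_le_lintegral S _)
  have hvx : v + x ∈ K := Metric.mem_cthickening_of_dist_le _ x 1 S hx (by simpa using hv)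
  rw [Set.indicator_of_mem hvx, Set.indicator_of_mem (Metric.self_subset_cthickening S hx)]

theorem measurableSet_setOf_floor_mul_eq (c : ℝ) (k : ℤ) : MeasurableSet {x : ℝ | ⌊c * x⌋ = k} :=
  measurableSet_eq_fun (Int.measurable_floor.comp (measurable_const_mul c)) measurable_const

theorem Real.volume_setOf_floor_mul_eq {c : ℝ} (hc : 0 < c) (k : ℤ) :
    volume {x : ℝ | ⌊c * x⌋ = k} = ENNReal.ofReal c⁻¹ := by
  have : {x : ℝ | ⌊c * x⌋ = k} = (c * ·) ⁻¹' Set.Ico (k : ℝ) (k + 1) := by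
    rw [← Int.preimage_floor_singleton]; rfl
  rw [this, Real.volume_preimage_mul_left hc.ne', Real.volume_Ico, abs_of_pos (inv_pos.2 hc)]
  simp

def gridCell (n : ℕ) (z : ℂ) : Set ℂ :=
  {w | ⌊(n:ℝ) * w.re⌋ = ⌊(n:ℝ) * z.re⌋ ∧ ⌊(n:ℝ) * w.im⌋ = ⌊(n:ℝ) * z.im⌋}

theorem gridCell_eq_preimage (n : ℕ) (z : ℂ) :
    gridCell n z = Complex.measurableEquivRealProd ⁻¹'
      ({x | ⌊(n:ℝ) * x⌋ = ⌊(n:ℝ) * z.re⌋} ×ˢ {y | ⌊(n:ℝ) * y⌋ = ⌊(n:ℝ) * z.im⌋}) :=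
  rfl

theorem volume_real_gridCell {n : ℕ} (hn : n ≠ 0) (z : ℂ) :
    volume.real (gridCell n z) = ((n : ℝ) ^ 2)⁻¹ := by
  have hn' : (0 : ℝ) < n := by positivity
  rw [measureReal_def, gridCell_eq_preimage,
    Complex.volume_preserving_equiv_real_prod.measure_preimage
      ((measurableSet_setOf_floor_mul_eq _ _).prod
        (measurableSet_setOf_floor_mul_eq _ _)).nullMeasurableSet, Measure.volume_eq_prod,
    Measure.prod_prod, Real.volume_setOf_floor_mul_eq hn', Real.volume_setOf_floor_mul_eq hn',
    ENNReal.toReal_mul, ENNReal.toReal_ofReal (by positivity)]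
  ring

theorem gridCell_subset_ball {n : ℕ} (hn : n ≠ 0) (z : ℂ) :
    gridCell n z ⊆ Metric.ball z (2 / n) := by
  have hn' : (0 : ℝ) < n := by positivity
  have key : ∀ a b : ℝ, ⌊(n:ℝ) * a⌋ = ⌊(n:ℝ) * b⌋ → |a - b| < 1 / n := by
    intro a b h
    have := Int.abs_sub_lt_one_of_floor_eq_floor h
    rw [← mul_sub, abs_mul, abs_of_pos hn'] at this
    rwa [lt_div_iff₀ hn', mul_comm]
  rintro w ⟨hre, him⟩
  rw [Metric.mem_ball, dist_eq_norm]
  calc ‖w - z‖ ≤ |(w - z).re| + |(w - z).im| := Complex.norm_le_abs_re_add_abs_im _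
    _ < 1 / n + 1 / n := add_lt_add (by simpa using key _ _ hre) (by simpa using key _ _ him)
    _ = 2 / n := by ring

theorem sqApprox_of_norm_lt (μ : ℂ → ℂ) {n : ℕ} {z : ℂ} (hz : ‖z‖ < n) :
    sqApprox μ n z = (n : ℂ) ^ 2 * ∫ w in gridCell n z, μ w := by
  have hre := abs_le.1 (Complex.abs_re_le_norm z)
  have him := abs_le.1 (Complex.abs_im_le_norm z)
  rw [sqApprox, if_pos ⟨by linarith, by linarith, by linarith, by linarith⟩]
  rfl

theorem enorm_sqApprox_sub_le {μ : ℂ → ℂ} (hμ : LocallyIntegrable μ) {n : ℕ} (hn : n ≠ 0)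
    {z : ℂ} (hz : ‖z‖ < n) :
    ‖sqApprox μ n z - μ z‖ₑ ≤
      (n : ℝ≥0∞) ^ 2 * ∫⁻ v in Metric.ball 0 (2 / n), ‖μ (v + z) - μ z‖ₑ := by
  have hsub : gridCell n z ⊆ Metric.closedBall z (2 / n) :=
    (gridCell_subset_ball hn z).trans Metric.ball_subset_closedBall
  have hint : IntegrableOn μ (gridCell n z) :=
    (hμ.integrableOn_isCompact (isCompact_closedBall z (2 / n))).mono_set hsub
  have hfin : volume (gridCell n z) ≠ ∞ :=
    ne_top_of_le_ne_top (isCompact_closedBall z (2 / n)).measure_ne_top (measure_mono hsub)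
  have hdiff : sqApprox μ n z - μ z = (n : ℂ) ^ 2 * ∫ w in gridCell n z, (μ w - μ z) := by
    have hconst : (n : ℂ) ^ 2 * ∫ _ in gridCell n z, μ z = μ z := by
      rw [setIntegral_const, volume_real_gridCell hn, Complex.real_smul]
      push_cast
      field_simp
    rw [sqApprox_of_norm_lt μ hz, integral_sub hint (integrableOn_const hfin), mul_sub, hconst]
  have htranslate : ∫⁻ w in Metric.ball z (2 / n), ‖μ w - μ z‖ₑ
      = ∫⁻ v in Metric.ball 0 (2 / n), ‖μ (v + z) - μ z‖ₑ := by
    have : Metric.ball (0 : ℂ) (2 / n) = (· + z) ⁻¹' Metric.ball z (2 / n) := by simp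
    rw [this]
    exact ((measurePreserving_add_right volume z).setLIntegral_comp_preimage_emb
      (measurableEmbedding_addRight z) (fun w => ‖μ w - μ z‖ₑ) _).symm
  calc ‖sqApprox μ n z - μ z‖ₑ
      = (n : ℝ≥0∞) ^ 2 * ‖∫ w in gridCell n z, (μ w - μ z)‖ₑ := by
        rw [hdiff, enorm_mul, enorm_pow, ← ofReal_norm, Complex.norm_natCast,
          ENNReal.ofReal_natCast]
    _ ≤ (n : ℝ≥0∞) ^ 2 * ∫⁻ w in gridCell n z, ‖μ w - μ z‖ₑ := by
        gcongr; exact enorm_integral_le_lintegral_enorm _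
    _ ≤ (n : ℝ≥0∞) ^ 2 * ∫⁻ w in Metric.ball z (2 / n), ‖μ w - μ z‖ₑ := by
        gcongr; exact gridCell_subset_ball hn z
    _ = _ := by rw [htranslate]

theorem setLIntegral_enorm_sqApprox_sub_le {μ : ℂ → ℂ} (hmeas : Measurable μ)
    (hμ : LocallyIntegrable μ) {n : ℕ} (hn : n ≠ 0) {S : Set ℂ} (hSm : MeasurableSet S)
    (hS : S ⊆ Metric.ball 0 n) :
    ∫⁻ z in S, ‖sqApprox μ n z - μ z‖ₑ ≤
      (n : ℝ≥0∞) ^ 2 * ∫⁻ v in Metric.ball 0 (2 / n), ∫⁻ z in S, ‖μ (v + z) - μ z‖ₑ := by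
  have hF : Measurable fun p : ℂ × ℂ => ‖μ (p.2 + p.1) - μ p.1‖ₑ :=
    ((hmeas.comp (measurable_snd.add measurable_fst)).sub (hmeas.comp measurable_fst)).enorm
  calc ∫⁻ z in S, ‖sqApprox μ n z - μ z‖ₑ
      ≤ ∫⁻ z in S, (n : ℝ≥0∞) ^ 2 * ∫⁻ v in Metric.ball 0 (2 / n), ‖μ (v + z) - μ z‖ₑ :=
        setLIntegral_mono' hSm fun z hz =>
          enorm_sqApprox_sub_le hμ hn (by simpa using hS hz)
    _ = (n : ℝ≥0∞) ^ 2 * ∫⁻ z in S, ∫⁻ v in Metric.ball 0 (2 / n), ‖μ (v + z) - μ z‖ₑ :=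
        lintegral_const_mul' _ _ (by simp)
    _ = _ := by rw [lintegral_lintegral_swap hF.aemeasurable]

theorem Complex.natCast_sq_mul_volume_ball_two_div {n : ℕ} (hn : n ≠ 0) :
    (n : ℝ≥0∞) ^ 2 * volume (Metric.ball (0 : ℂ) (2 / n)) = 4 * NNReal.pi := by
  have : (n : ℝ≥0∞) * ENNReal.ofReal (2 / n) = 2 := by
    rw [← ENNReal.ofReal_natCast, ← ENNReal.ofReal_mul (by positivity),
      mul_div_cancel₀ _ (by exact_mod_cast hn)]
    simp
  rw [Complex.volume_ball, ← mul_assoc, ← mul_pow, this]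
  norm_num

theorem Complex.tendsto_natCast_sq_mul_setLIntegral_ball_two_div {g : ℂ → ℝ≥0∞}
    (hg : Tendsto g (𝓝 0) (𝓝 0)) :
    Tendsto (fun n : ℕ => (n : ℝ≥0∞) ^ 2 * ∫⁻ v in Metric.ball 0 (2 / n), g v) atTop (𝓝 0) := by
  rw [ENNReal.tendsto_nhds_zero]
  intro ε hε
  set C : ℝ≥0∞ := 4 * NNReal.pi
  have hC0 : C ≠ 0 := by simp [C, NNReal.pi_ne_zero]
  have hCtop : C ≠ ∞ := ENNReal.mul_ne_top (by simp) ENNReal.coe_ne_top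
  obtain ⟨δ, hδ, hgδ⟩ := Metric.eventually_nhds_iff_ball.1
    ((ENNReal.tendsto_nhds_zero.1 hg) (ε / C) (ENNReal.div_pos hε.ne' hCtop))
  have hr : Tendsto (fun n : ℕ => 2 / (n : ℝ)) atTop (𝓝 0) :=
    tendsto_const_div_atTop_nhds_zero_nat 2
  filter_upwards [hr.eventually (gt_mem_nhds hδ), eventually_ne_atTop 0] with n hnδ hn
  calc (n : ℝ≥0∞) ^ 2 * ∫⁻ v in Metric.ball 0 (2 / n), g v
      ≤ (n : ℝ≥0∞) ^ 2 * ∫⁻ _ in Metric.ball (0 : ℂ) (2 / n), ε / C :=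
        mul_le_mul_right (setLIntegral_mono' measurableSet_ball fun v hv =>
          hgδ v (Metric.ball_subset_ball hnδ.le hv)) _
    _ = ε / C * ((n : ℝ≥0∞) ^ 2 * volume (Metric.ball (0 : ℂ) (2 / n))) := by
        rw [setLIntegral_const]; ring
    _ = ε := by rw [Complex.natCast_sq_mul_volume_ball_two_div hn, ENNReal.div_mul_cancel hC0 hCtop]

/-- Lemma mnm: local `L¹` convergence of the piecewise-constant square averages. -/
theorem sqApprox_tendsto_L1 (μ : ℂ → ℂ) (hmeas : Measurable μ)
    (hbound : eLpNorm μ ⊤ volume < 1) :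
    ∀ S : Set ℂ, IsCompact S →
      Tendsto (fun n : ℕ => ∫ z in S, ‖sqApprox μ n z - μ z‖)
        atTop (nhds 0) := by
  intro S hS
  have hμ : LocallyIntegrable μ :=
    MemLp.locallyIntegrable ⟨hmeas.aestronglyMeasurable, hbound.trans ENNReal.one_lt_top⟩ le_top
  obtain ⟨R, hSR⟩ := hS.isBounded.subset_ball 0
  have hlin : Tendsto (fun n : ℕ => ∫⁻ z in S, ‖sqApprox μ n z - μ z‖ₑ) atTop (𝓝 0) := by
    refine tendsto_of_tendsto_of_tendsto_of_le_of_le' tendsto_const_nhds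
      (Complex.tendsto_natCast_sq_mul_setLIntegral_ball_two_div
        (tendsto_setLIntegral_enorm_comp_add_sub volume hμ hS))
      (.of_forall fun _ => zero_le) ?_
    filter_upwards [eventually_gt_atTop ⌈R⌉₊] with n hRn
    have hn : n ≠ 0 := by omega
    refine setLIntegral_enorm_sqApprox_sub_le hmeas hμ hn hS.measurableSet
      (hSR.trans (Metric.ball_subset_ball ?_))
    exact (Nat.le_ceil R).trans (by exact_mod_cast hRn.le)
  refine tendsto_of_tendsto_of_tendsto_of_le_of_le tendsto_const_nhds
    ((ENNReal.tendsto_toReal ENNReal.zero_ne_top).comp hlin)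
    (fun n => integral_nonneg fun _ => norm_nonneg _) fun n => ?_
  simpa using (le_abs_self _).trans (norm_integral_le_lintegral_norm (μ := volume.restrict S)
    (fun z => ‖sqApprox μ n z - μ z‖))
end

section
/- Pointwise holomorphic representative of an L^∞-valued power series (Proposition muhol, direction power series ⇒ pointwise representative): Let (aₙ)_{n∈ℕ} be a sequence of Lebesgue-measurable essentially bounded functions ℂ → ℂ such that for every ρ ∈ (0,1) the series Σₙ ‖aₙ‖_∞ ρⁿ converges, where ‖g‖_∞ denotes the essential supremum of |g|. Then there exists a function μ : 𝔻 × ℂ → ℂ such that: (i) for every z ∈ ℂ, the function t ↦ μ(t,z) is holomorphic on 𝔻; (ii) for every t ∈ 𝔻, the function z ↦ μ(t,z) is measurable and the essential supremum over z of |μ(t,z) − Σ_{k=0}^{n} t^k a_k(z)| tends to 0 as n → ∞ (so z ↦ μ(t,z) represents the sum of the power series Σ t^k a_k in L^∞(ℂ)). -/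
open MeasureTheory Filter Metric

open scoped NNReal ENNReal Topology

/-!
Replacing each `aₙ` by the representative `bₙ` that vanishes where `‖aₙ‖` exceeds `‖aₙ‖_∞` makes
the bound `‖bₙ z‖ ≤ ‖aₙ‖_∞` hold everywhere rather than almost everywhere. Then
`μ(t, z) = ∑ tⁿ bₙ(z)` is, for each `z`, a power series of radius at least one, and, for each `t`,
the Weierstrass M-test with majorant `‖aₙ‖_∞ |t|ⁿ` makes its partial sums converge uniformly, hence
in `L^∞`; those partial sums agree almost everywhere with the ones built from the `aₙ`.
-/

section EssBoundedRepr

variable {α E : Type*} [MeasurableSpace α] [NormedAddCommGroup E]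

noncomputable def essBoundedRepr (μ : Measure α) (f : α → E) : α → E :=
  {x | ‖f x‖ ≤ (eLpNorm f ⊤ μ).toReal}.indicator f

theorem norm_essBoundedRepr_le (μ : Measure α) (f : α → E) (x : α) :
    ‖essBoundedRepr μ f x‖ ≤ (eLpNorm f ⊤ μ).toReal := by
  simp only [essBoundedRepr, Set.indicator_apply, Set.mem_ofPred_eq]
  split_ifs with hx
  exacts [hx, by simp]

theorem Measurable.essBoundedRepr [MeasurableSpace E] [OpensMeasurableSpace E] {f : α → E}
    (hf : Measurable f) (μ : Measure α) : Measurable (essBoundedRepr μ f) :=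
  hf.indicator (measurableSet_le hf.norm measurable_const)

theorem essBoundedRepr_ae_eq {μ : Measure α} {f : α → E} (hf : eLpNorm f ⊤ μ ≠ ⊤) :
    essBoundedRepr μ f =ᵐ[μ] f := by
  filter_upwards [enorm_ae_le_eLpNormEssSup f μ] with x hx
  refine Set.indicator_of_mem (s := {x | ‖f x‖ ≤ (eLpNorm f ⊤ μ).toReal}) ?_ f
  rw [← eLpNorm_exponent_top] at hx
  simpa using ENNReal.toReal_mono hf hx

end EssBoundedRepr

theorem tendsto_eLpNorm_top_sub_of_tendstoUniformly {ι α E : Type*} [MeasurableSpace α]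
    [NormedAddCommGroup E] {l : Filter ι} {F : ι → α → E} {f : α → E}
    (h : TendstoUniformly F f l) (μ : Measure α) :
    Tendsto (fun i => eLpNorm (fun x => f x - F i x) ⊤ μ) l (𝓝 0) := by
  rw [ENNReal.tendsto_nhds_zero]
  intro ε hε
  rcases eq_or_ne ε ⊤ with rfl | hε_top
  · exact Eventually.of_forall fun _ => le_top
  filter_upwards [Metric.tendstoUniformly_iff.1 h ε.toReal (ENNReal.toReal_pos hε.ne' hε_top)]
    with i hi
  rw [eLpNorm_exponent_top, ← ENNReal.ofReal_toReal hε_top]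
  refine eLpNormEssSup_le_of_ae_bound (Eventually.of_forall fun x => ?_)
  rw [← dist_eq_norm]
  exact (hi x).le

section WeightedSeries

variable {C : ℕ → ℝ≥0∞} {ρ : ℝ}

theorem ne_top_of_tsum_mul_ofReal_pow_lt_top (h : ∑' n, C n * ENNReal.ofReal (ρ ^ n) < ⊤)
    (hρ : 0 < ρ) (n : ℕ) : C n ≠ ⊤ := by
  refine (ENNReal.lt_top_of_mul_ne_top_left ((ENNReal.le_tsum n).trans_lt h).ne ?_).ne
  simpa using pow_pos hρ n

theorem summable_toReal_mul_pow_of_tsum_lt_top (h : ∑' n, C n * ENNReal.ofReal (ρ ^ n) < ⊤)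
    {r : ℝ} (hr : 0 ≤ r) (hrρ : r ≤ ρ) : Summable fun n => (C n).toReal * r ^ n := by
  have hρ_sum : Summable fun n => (C n).toReal * ρ ^ n := by
    simpa [ENNReal.toReal_mul, ENNReal.toReal_ofReal (pow_nonneg (hr.trans hrρ) _)]
      using ENNReal.summable_toReal h.ne
  refine hρ_sum.of_nonneg_of_le (fun n => by positivity) fun n => ?_
  gcongr

end WeightedSeries

theorem differentiableOn_tsum_mul_pow {𝕜 : Type*} [NontriviallyNormedField 𝕜] [CompleteSpace 𝕜]
    {b : ℕ → 𝕜} (hb : ∀ r : ℝ≥0, r < 1 → Summable fun n => ‖b n‖ * r ^ n) :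
    DifferentiableOn 𝕜 (fun t => ∑' n, t ^ n * b n) (ball 0 1) := by
  set p := FormalMultilinearSeries.ofScalars 𝕜 b
  have hp : 1 ≤ p.radius := ENNReal.le_of_forall_nnreal_lt fun r hr =>
    p.le_radius_of_summable (by simpa [p] using hb r (mod_cast hr))
  have hdiff := ((p.hasFPowerSeriesOnBall (one_pos.trans_le hp)).mono one_pos hp).differentiableOn
  rw [← ENNReal.ofReal_one, Metric.eball_ofReal] at hdiff
  refine hdiff.congr fun t _ => ?_
  simp [p, FormalMultilinearSeries.sum]

/-- Proposition muhol (power series ⇒ pointwise holomorphic representative): an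
`L^∞(ℂ)`-valued power series with radius of convergence at least one has a representative
`μ(t,z)` that is holomorphic in `t` for every `z` and represents the sum of the series in
`L^∞` for every `t` in the unit disk. -/
theorem pointwise_holomorphic_representative
    (a : ℕ → ℂ → ℂ) (hmeas : ∀ n, Measurable (a n))
    (hrad : ∀ ρ : ℝ, ρ ∈ Set.Ioo (0:ℝ) 1 →
      (∑' n : ℕ, eLpNorm (a n) ⊤ volume * ENNReal.ofReal (ρ ^ n)) < ⊤) :
    ∃ μ : ℂ → ℂ → ℂ,
      (∀ z : ℂ, DifferentiableOn ℂ (fun t => μ t z) (ball 0 1)) ∧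
      ∀ t ∈ ball (0:ℂ) 1,
        Measurable (fun z => μ t z) ∧
        Tendsto (fun n : ℕ =>
            eLpNorm (fun z => μ t z - ∑ k ∈ Finset.range (n+1), t ^ k * a k z) ⊤ volume)
          atTop (nhds 0) := by
  set c : ℕ → ℝ := fun n => (eLpNorm (a n) ⊤ volume).toReal
  set b : ℕ → ℂ → ℂ := fun n => essBoundedRepr volume (a n)
  have hb_le (n : ℕ) (z : ℂ) : ‖b n z‖ ≤ c n := norm_essBoundedRepr_le _ _ z
  have hb_ae (n : ℕ) : b n =ᵐ[volume] a n := essBoundedRepr_ae_eq <|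
    ne_top_of_tsum_mul_ofReal_pow_lt_top (hrad (1 / 2) ⟨by norm_num, by norm_num⟩) one_half_pos n
  have hc_summable {r : ℝ} (hr : 0 ≤ r) (hr1 : r < 1) : Summable fun n => c n * r ^ n :=
    summable_toReal_mul_pow_of_tsum_lt_top (hrad ((1 + r) / 2) ⟨by linarith, by linarith⟩) hr
      (by linarith)
  refine ⟨fun t z => ∑' n, t ^ n * b n z, fun z => ?_, fun t ht => ?_⟩
  · refine differentiableOn_tsum_mul_pow fun r hr => ?_
    refine (hc_summable r.coe_nonneg (mod_cast hr)).of_nonneg_of_le (fun n => by positivity)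
      fun n => ?_
    gcongr
    exact hb_le n z
  have hunif : TendstoUniformly (fun N z => ∑ n ∈ Finset.range N, t ^ n * b n z)
      (fun z => ∑' n, t ^ n * b n z) atTop := by
    refine tendstoUniformly_tsum_nat (hc_summable (norm_nonneg t) (mem_ball_zero_iff.1 ht))
      fun n z => ?_
    rw [norm_mul, norm_pow, mul_comm]
    gcongr
    exact hb_le n z
  refine ⟨measurable_of_tendsto_metrizable (fun N => ?_) (tendsto_pi_nhds.2 hunif.tendsto_at), ?_⟩
  · exact Finset.measurable_sum _ fun n _ => measurable_const.mul ((hmeas n).essBoundedRepr _)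
  refine ((tendsto_eLpNorm_top_sub_of_tendstoUniformly hunif volume).comp
    (tendsto_add_atTop_nat 1)).congr fun n => eLpNorm_congr_ae ?_
  filter_upwards [ae_all_iff.2 hb_ae] with z hz
  simp only [hz]
end

section
/- From a pointwise holomorphic bounded family to an L^∞-valued power series (Proposition muhol, direction pointwise ⇒ power series): Let μ : 𝔻 × ℂ → ℂ be a function such that: (i) for every t ∈ 𝔻, z ↦ μ(t,z) is Lebesgue-measurable and M(t) := esssup_z |μ(t,z)| is finite, with t ↦ M(t) locally bounded on 𝔻; (ii) for every z ∈ ℂ, t ↦ μ(t,z) is holomorphic on 𝔻. Then there exist Lebesgue-measurable essentially bounded functions Aₙ : ℂ → ℂ, n ∈ ℕ, such that limsup_n (‖Aₙ‖_∞)^{1/n} ≤ 1 and, for every t ∈ 𝔻, esssup_z |μ(t,z) − Σ_{k=0}^{n} t^k A_k(z)| → 0 as n → ∞. -/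
/-!
For each `z`, the Taylor coefficients `A n z` of `t ↦ μ(t, z)` at `0` are Cauchy integrals over
a circle of radius `r < 1`, hence measurable in `z`. By compactness of the circle the local bounds
on `‖μ(t, ·)‖_∞` become one bound `C` on it, and Fubini turns this into the Cauchy estimate
`|A n z| ≤ C r⁻ⁿ` for almost every `z`, simultaneously for all `n`. So `‖A n‖_∞ ≤ C r⁻ⁿ` for every
`r < 1`, which is the limsup bound, and for `‖t‖ < r` the tails of the Taylor series are
dominated, uniformly in `z`, by a geometric series.
-/

open MeasureTheory Filter Metric
open Set Topology
open scoped Real ENNReal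

section CauchyPowerSeries

variable {E : Type*} [NormedAddCommGroup E] [NormedSpace ℂ E]

theorem norm_cauchyPowerSeries_coeff_le {f : ℂ → E} {c : ℂ} {R C : ℝ} (hR : 0 < R)
    (hf : CircleIntegrable f c R) (hC : ∀ᵐ θ, ‖f (circleMap c R θ)‖ ≤ C) (n : ℕ) :
    ‖(cauchyPowerSeries f c R).coeff n‖ ≤ C * R⁻¹ ^ n := by
  have hint : ∫ θ in 0..2 * π, ‖f (circleMap c R θ)‖ ≤ 2 * π * C := by
    calc ∫ θ in 0..2 * π, ‖f (circleMap c R θ)‖ ≤ ∫ _ in 0..2 * π, C :=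
          intervalIntegral.integral_mono_ae Real.two_pi_pos.le hf.norm
            intervalIntegrable_const hC
      _ = 2 * π * C := by simp
  calc ‖(cauchyPowerSeries f c R).coeff n‖ = ‖cauchyPowerSeries f c R n‖ :=
        FormalMultilinearSeries.norm_apply_eq_norm_coef.symm
    _ ≤ ((2 * π)⁻¹ * ∫ θ in 0..2 * π, ‖f (circleMap c R θ)‖) * |R|⁻¹ ^ n :=
        norm_cauchyPowerSeries_le f c R n
    _ ≤ ((2 * π)⁻¹ * (2 * π * C)) * |R|⁻¹ ^ n := by gcongr
    _ = C * R⁻¹ ^ n := by rw [abs_of_pos hR, inv_mul_cancel_left₀ (by positivity)]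

variable [CompleteSpace E]

theorem cauchyPowerSeries_eq_of_differentiableOn_ball {f : ℂ → E} {c : ℂ} {R r r' : ℝ}
    (hf : DifferentiableOn ℂ f (ball c R)) (hr : 0 < r) (hrR : r < R) (hr' : 0 < r')
    (hr'R : r' < R) : cauchyPowerSeries f c r = cauchyPowerSeries f c r' := by
  have key : ∀ s : ℝ, 0 < s → s < R →
      HasFPowerSeriesOnBall f (cauchyPowerSeries f c s) c (ENNReal.ofReal s) := by
    intro s hs hsR
    lift s to NNReal using hs.le
    rw [ENNReal.ofReal_coe_nnreal]
    exact (hf.mono (closedBall_subset_ball hsR)).hasFPowerSeriesOnBall (mod_cast hs)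
  exact (key r hr hrR).hasFPowerSeriesAt.eq_formalMultilinearSeries
    (key r' hr' hr'R).hasFPowerSeriesAt

theorem hasSum_cauchyPowerSeries_coeff {f : ℂ → E} {c w : ℂ} {R r : ℝ}
    (hf : DifferentiableOn ℂ f (ball c R)) (hr : 0 < r) (hrR : r < R) (hw : w ∈ ball c R) :
    HasSum (fun n => (w - c) ^ n • (cauchyPowerSeries f c r).coeff n) (f w) := by
  obtain ⟨s, hws, hsR⟩ := exists_between (mem_ball.1 hw)
  have hs : 0 < s := dist_nonneg.trans_lt hws
  lift s to NNReal using hs.le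
  have hps : HasFPowerSeriesOnBall f (cauchyPowerSeries f c s) c s :=
    (hf.mono (closedBall_subset_ball hsR)).hasFPowerSeriesOnBall (mod_cast hs)
  rw [cauchyPowerSeries_eq_of_differentiableOn_ball hf hs hsR hr hrR] at hps
  have hmem : w - c ∈ eball (0 : ℂ) s := by
    rwa [eball_coe, mem_ball_zero_iff, ← dist_eq_norm]
  simpa [FormalMultilinearSeries.apply_eq_pow_smul_coeff] using hps.hasSum hmem

end CauchyPowerSeries

section Measurability

variable {X : Type*} [MeasurableSpace X]

theorem measurable_circleIntegral {f : X → ℂ → ℂ} {c : ℂ} {R : ℝ}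
    (hf : Measurable fun p : ℝ × X => f p.2 (circleMap c R p.1)) :
    Measurable fun x => ∮ z in C(c, R), f x z := by
  have hcm : Measurable (circleMap 0 R) := (continuous_circleMap 0 R).measurable
  have hg : Measurable fun p : ℝ × X =>
      deriv (circleMap c R) p.1 • f p.2 (circleMap c R p.1) := by
    simp only [deriv_circleMap, smul_eq_mul]
    exact ((hcm.comp measurable_fst).mul_const _).mul hf
  simp only [circleIntegral, intervalIntegral.integral_of_le Real.two_pi_pos.le]
  exact hg.stronglyMeasurable.integral_prod_left'.measurable

theorem measurable_cauchyPowerSeries_coeff {f : X → ℂ → ℂ} {c : ℂ} {R : ℝ}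
    (hf : Measurable fun p : ℝ × X => f p.2 (circleMap c R p.1)) (n : ℕ) :
    Measurable fun x => (cauchyPowerSeries (f x) c R).coeff n := by
  have hcm : Measurable fun p : ℝ × X => circleMap c R p.1 - c :=
    ((continuous_circleMap c R).measurable.comp measurable_fst).sub_const c
  simp_rw [show ∀ x, (cauchyPowerSeries (f x) c R).coeff n =
    cauchyPowerSeries (f x) c R n (fun _ => 1) from fun _ => rfl, cauchyPowerSeries_apply]
  refine Measurable.const_smul (measurable_circleIntegral (f := fun x z =>
    (1 / (z - c)) ^ n • (z - c)⁻¹ • f x z) ?_) (2 * π * Complex.I : ℂ)⁻¹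
  simp only [smul_eq_mul]
  exact ((measurable_const.div hcm).pow_const n).mul (hcm.inv.mul hf)

end Measurability

theorem IsCompact.exists_bound_of_locallyBounded {X : Type*} [TopologicalSpace X] {K : Set X}
    (hK : IsCompact K) {f : X → ℝ≥0∞} (hf : ∀ x ∈ K, ∃ C < ∞, ∀ᶠ y in 𝓝[K] x, f y ≤ C) :
    ∃ C < ∞, ∀ y ∈ K, f y ≤ C := by
  refine hK.induction_on (p := fun s => ∃ C < ∞, ∀ y ∈ s, f y ≤ C)
    ⟨0, ENNReal.zero_lt_top, by simp⟩ ?_ ?_ fun x hx => ?_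
  · rintro s t hst ⟨C, hC, hle⟩
    exact ⟨C, hC, fun y hy => hle y (hst hy)⟩
  · rintro s t ⟨C, hC, hle⟩ ⟨C', hC', hle'⟩
    refine ⟨max C C', max_lt hC hC', ?_⟩
    rintro y (hy | hy)
    exacts [(hle y hy).trans (le_max_left _ _), (hle' y hy).trans (le_max_right _ _)]
  · obtain ⟨C, hC, hle⟩ := hf x hx
    exact ⟨_, hle, C, hC, fun _ hy => hy⟩

theorem limsup_rpow_inv_le_one_of_forall_bound {a : ℕ → ℝ} (ha : ∀ n, 0 ≤ a n)
    (hbound : ∀ b > 1, ∃ C, ∀ n, a n ≤ C * b ^ n) :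
    limsup (fun n : ℕ => a n ^ (n : ℝ)⁻¹) atTop ≤ 1 := by
  refine le_of_forall_gt_imp_ge_of_dense fun b hb => ?_
  obtain ⟨C, hC⟩ := hbound b hb
  set M := max C 1
  have hM : 0 < M := zero_lt_one.trans_le (le_max_right _ _)
  have hroot : Tendsto (fun n : ℕ => M ^ (n : ℝ)⁻¹ * b) atTop (𝓝 b) := by
    have h := ((Real.continuousAt_const_rpow hM.ne').tendsto.comp
      (tendsto_inv_atTop_zero.comp tendsto_natCast_atTop_atTop)).mul_const b
    simpa [Function.comp_def] using h
  have hle : ∀ᶠ n : ℕ in atTop, a n ^ (n : ℝ)⁻¹ ≤ M ^ (n : ℝ)⁻¹ * b := by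
    filter_upwards [eventually_ne_atTop 0] with n hn
    calc a n ^ (n : ℝ)⁻¹ ≤ (M * b ^ n) ^ (n : ℝ)⁻¹ := by
          gcongr
          exacts [ha n, (hC n).trans (by gcongr; exact le_max_left _ _)]
      _ = M ^ (n : ℝ)⁻¹ * b := by
          rw [Real.mul_rpow hM.le (by positivity), ← Real.rpow_natCast,
            ← Real.rpow_mul (by positivity), mul_inv_cancel₀ (by exact_mod_cast hn),
            Real.rpow_one]
  calc limsup (fun n : ℕ => a n ^ (n : ℝ)⁻¹) atTop
      ≤ limsup (fun n : ℕ => M ^ (n : ℝ)⁻¹ * b) atTop :=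
        limsup_le_limsup hle (isCoboundedUnder_le_of_le atTop fun n => by have := ha n; positivity)
          hroot.isBoundedUnder_le
    _ = b := hroot.limsup_eq

theorem tendsto_eLpNorm_top_sub_sum_of_geometric_bound {α E : Type*} [MeasurableSpace α]
    {μ : Measure α} [NormedAddCommGroup E] {u : ℕ → α → E} {f : α → E} {C q : ℝ}
    (hq0 : 0 ≤ q) (hq1 : q < 1) (hsum : ∀ᵐ x ∂μ, HasSum (u · x) (f x))
    (hu : ∀ᵐ x ∂μ, ∀ n, ‖u n x‖ ≤ C * q ^ n) :
    Tendsto (fun n => eLpNorm (fun x => f x - ∑ k ∈ Finset.range n, u k x) ⊤ μ) atTop (𝓝 0) := by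
  have hbound : ∀ n, eLpNorm (fun x => f x - ∑ k ∈ Finset.range n, u k x) ⊤ μ ≤
      ENNReal.ofReal (C * q ^ n / (1 - q)) := fun n => by
    rw [eLpNorm_exponent_top]
    refine eLpNormEssSup_le_of_ae_bound ?_
    filter_upwards [hsum, hu] with x hx hux
    rw [norm_sub_rev]
    exact norm_sub_le_of_geometric_bound_of_hasSum hq1 hux hx n
  have hlim : Tendsto (fun n => ENNReal.ofReal (C * q ^ n / (1 - q))) atTop (𝓝 0) := by
    simpa using ENNReal.tendsto_ofReal
      (((tendsto_pow_atTop_nhds_zero_of_lt_one hq0 hq1).const_mul C).div_const (1 - q))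
  exact tendsto_of_tendsto_of_tendsto_of_le_of_le tendsto_const_nhds hlim (fun _ => zero_le)
    hbound

/-- The radius `1/2` is arbitrary: for a function holomorphic on the unit disc, every radius in
`(0, 1)` gives the same series (`cauchyPowerSeries_eq_of_differentiableOn_ball`). -/
noncomputable def taylorCoeff (μ : ℂ → ℂ → ℂ) (n : ℕ) (z : ℂ) : ℂ :=
  (cauchyPowerSeries (fun t => μ t z) 0 2⁻¹).coeff n

section HolomorphicFamily

variable {μ : ℂ → ℂ → ℂ} {r : ℝ}

theorem taylorCoeff_eq_cauchyPowerSeries_coeff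
    (hholo : ∀ z, DifferentiableOn ℂ (fun t => μ t z) (ball 0 1)) (hr0 : 0 < r) (hr1 : r < 1)
    (n : ℕ) (z : ℂ) : taylorCoeff μ n z = (cauchyPowerSeries (fun t => μ t z) 0 r).coeff n := by
  rw [taylorCoeff,
    cauchyPowerSeries_eq_of_differentiableOn_ball (hholo z) (by norm_num) (by norm_num) hr0 hr1]

theorem measurable_uncurry_circleMap (hmeas : ∀ t ∈ ball (0 : ℂ) 1, Measurable (μ t))
    (hholo : ∀ z, DifferentiableOn ℂ (fun t => μ t z) (ball 0 1)) (hr0 : 0 ≤ r) (hr1 : r < 1) :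
    Measurable fun p : ℝ × ℂ => μ (circleMap 0 r p.1) p.2 :=
  have hmem : ∀ θ, circleMap 0 r θ ∈ ball (0 : ℂ) 1 :=
    fun θ => sphere_subset_ball hr1 (circleMap_mem_sphere 0 hr0 θ)
  measurable_uncurry_of_continuous_of_measurable (u := fun θ z => μ (circleMap 0 r θ) z)
    (fun z => (hholo z).continuousOn.comp_continuous (continuous_circleMap 0 r) hmem)
    (fun θ => hmeas _ (hmem θ))

theorem measurable_taylorCoeff (hmeas : ∀ t ∈ ball (0 : ℂ) 1, Measurable (μ t))
    (hholo : ∀ z, DifferentiableOn ℂ (fun t => μ t z) (ball 0 1)) (n : ℕ) :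
    Measurable (taylorCoeff μ n) :=
  measurable_cauchyPowerSeries_coeff (f := fun z t => μ t z)
    (measurable_uncurry_circleMap hmeas hholo (by norm_num) (by norm_num)) n

theorem exists_eLpNorm_le_on_circle
    (hlocbd : ∀ t₀ ∈ ball (0 : ℂ) 1, ∃ ε > (0 : ℝ), ∃ C : ℝ≥0∞, C < ⊤ ∧
      ∀ t ∈ ball t₀ ε ∩ ball (0 : ℂ) 1, eLpNorm (μ t) ⊤ volume ≤ C)
    (hr0 : 0 ≤ r) (hr1 : r < 1) :
    ∃ C < ∞, ∀ θ, eLpNorm (μ (circleMap 0 r θ)) ⊤ volume ≤ C := by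
  obtain ⟨C, hC, hle⟩ := (isCompact_sphere (0 : ℂ) r).exists_bound_of_locallyBounded
    (f := fun t => eLpNorm (μ t) ⊤ volume) fun t ht => by
      obtain ⟨ε, hε, C, hC, hle⟩ := hlocbd t (sphere_subset_ball hr1 ht)
      exact ⟨C, hC, mem_nhdsWithin.2 ⟨ball t ε, isOpen_ball, mem_ball_self hε,
        fun y hy => hle y ⟨hy.1, sphere_subset_ball hr1 hy.2⟩⟩⟩
  exact ⟨C, hC, fun θ => hle _ (circleMap_mem_sphere 0 hr0 θ)⟩

theorem exists_ae_norm_taylorCoeff_le (hmeas : ∀ t ∈ ball (0 : ℂ) 1, Measurable (μ t))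
    (hlocbd : ∀ t₀ ∈ ball (0 : ℂ) 1, ∃ ε > (0 : ℝ), ∃ C : ℝ≥0∞, C < ⊤ ∧
      ∀ t ∈ ball t₀ ε ∩ ball (0 : ℂ) 1, eLpNorm (μ t) ⊤ volume ≤ C)
    (hholo : ∀ z, DifferentiableOn ℂ (fun t => μ t z) (ball 0 1)) (hr0 : 0 < r) (hr1 : r < 1) :
    ∃ D ≥ 0, ∀ᵐ z, ∀ n, ‖taylorCoeff μ n z‖ ≤ D * r⁻¹ ^ n := by
  obtain ⟨C, hC, hle⟩ := exists_eLpNorm_le_on_circle hlocbd hr0.le hr1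
  have hjoint := measurable_uncurry_circleMap hmeas hholo hr0.le hr1
  have hcircle : ∀ᵐ z, ∀ᵐ θ, ‖μ (circleMap 0 r θ) z‖ ≤ C.toReal := by
    rw [Measure.ae_ae_comm (p := fun z θ => ‖μ (circleMap 0 r θ) z‖ ≤ C.toReal)
      (measurableSet_le (hjoint.comp measurable_swap).norm measurable_const)]
    refine ae_of_all _ fun θ => ?_
    filter_upwards [ae_le_eLpNormEssSup (f := μ (circleMap 0 r θ)) (μ := volume)] with z hz
    rw [← eLpNorm_exponent_top] at hz
    simpa using ENNReal.toReal_mono hC.ne (hz.trans (hle θ))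
  refine ⟨C.toReal, ENNReal.toReal_nonneg, ?_⟩
  filter_upwards [hcircle] with z hz n
  rw [taylorCoeff_eq_cauchyPowerSeries_coeff hholo hr0 hr1]
  exact norm_cauchyPowerSeries_coeff_le hr0
    (((hholo z).continuousOn.mono (sphere_subset_ball hr1)).circleIntegrable hr0.le) hz n

end HolomorphicFamily

theorem holomorphic_family_is_power_series_general
    (μ : ℂ → ℂ → ℂ)
    (hmeas : ∀ t ∈ ball (0:ℂ) 1, Measurable (μ t))
    (hlocbd : ∀ t₀ ∈ ball (0:ℂ) 1, ∃ ε > (0:ℝ), ∃ C : ENNReal, C < ⊤ ∧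
      ∀ t ∈ ball t₀ ε ∩ ball (0:ℂ) 1, eLpNorm (μ t) ⊤ volume ≤ C)
    (hholo : ∀ z : ℂ, DifferentiableOn ℂ (fun t => μ t z) (ball 0 1)) :
    ∃ A : ℕ → ℂ → ℂ,
      (∀ n, Measurable (A n) ∧ eLpNorm (A n) ⊤ volume < ⊤) ∧
      limsup (fun n : ℕ => ((eLpNorm (A n) ⊤ volume).toReal) ^ ((n:ℝ)⁻¹)) atTop ≤ 1 ∧
      ∀ t ∈ ball (0:ℂ) 1,
        Tendsto (fun n : ℕ =>
            eLpNorm (fun z => μ t z - ∑ k ∈ Finset.range (n+1), t ^ k * A k z) ⊤ volume)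
          atTop (nhds 0) := by
  have hcoeff {r : ℝ} (hr0 : 0 < r) (hr1 : r < 1) :=
    exists_ae_norm_taylorCoeff_le hmeas hlocbd hholo hr0 hr1
  have hnorm : ∀ r : ℝ, 0 < r → r < 1 → ∃ D ≥ 0, ∀ n,
      eLpNorm (taylorCoeff μ n) ⊤ volume ≤ ENNReal.ofReal (D * r⁻¹ ^ n) := fun r hr0 hr1 => by
    obtain ⟨D, hD, hle⟩ := hcoeff hr0 hr1
    exact ⟨D, hD, fun n => eLpNormEssSup_le_of_ae_bound (hle.mono fun z hz => hz n)⟩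
  refine ⟨taylorCoeff μ, fun n => ⟨measurable_taylorCoeff hmeas hholo n, ?_⟩, ?_, fun t ht => ?_⟩
  · obtain ⟨D, -, hle⟩ := hnorm 2⁻¹ (by norm_num) (by norm_num)
    exact (hle n).trans_lt ENNReal.ofReal_lt_top
  · refine limsup_rpow_inv_le_one_of_forall_bound (fun n => ENNReal.toReal_nonneg) fun b hb => ?_
    obtain ⟨D, hD, hle⟩ := hnorm b⁻¹ (by positivity) (inv_lt_one_of_one_lt₀ hb)
    exact ⟨D, fun n => by simpa using ENNReal.toReal_le_of_le_ofReal (by positivity) (hle n)⟩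
  · have ht1 : ‖t‖ < 1 := mem_ball_zero_iff.1 ht
    obtain ⟨r, htr, hr1⟩ := exists_between ht1
    have hr0 : 0 < r := (norm_nonneg t).trans_lt htr
    obtain ⟨D, -, hle⟩ := hcoeff hr0 hr1
    have hq : ‖t‖ / r < 1 := (div_lt_one hr0).2 htr
    refine (tendsto_eLpNorm_top_sub_sum_of_geometric_bound (C := D) (by positivity) hq
      (ae_of_all _ fun z => ?_) ?_).comp (tendsto_add_atTop_nat 1)
    · simpa [taylorCoeff] using
        hasSum_cauchyPowerSeries_coeff (hholo z) (by norm_num) (by norm_num) ht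
    · filter_upwards [hle] with z hz k
      calc ‖t ^ k * taylorCoeff μ k z‖ ≤ ‖t‖ ^ k * (D * r⁻¹ ^ k) := by
            rw [norm_mul, norm_pow]; gcongr; exact hz k
        _ = D * (‖t‖ / r) ^ k := by ring

/-- Proposition muhol (pointwise holomorphic ⇒ power series): if `μ(t,·)` is a family of
measurable essentially bounded functions, with locally bounded essential sup, and
`t ↦ μ(t,z)` is holomorphic on the unit disk for every `z`, then `t ↦ μ(t,·)` is the sum
of an `L^∞`-valued power series with radius of convergence at least one. -/
theorem holomorphic_family_is_power_series
    (μ : ℂ → ℂ → ℂ)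
    (hmeas : ∀ t ∈ ball (0:ℂ) 1, Measurable (μ t))
    (hbd : ∀ t ∈ ball (0:ℂ) 1, eLpNorm (μ t) ⊤ volume < ⊤)
    (hlocbd : ∀ t₀ ∈ ball (0:ℂ) 1, ∃ ε > (0:ℝ), ∃ C : ENNReal, C < ⊤ ∧
      ∀ t ∈ ball t₀ ε ∩ ball (0:ℂ) 1, eLpNorm (μ t) ⊤ volume ≤ C)
    (hholo : ∀ z : ℂ, DifferentiableOn ℂ (fun t => μ t z) (ball 0 1)) :
    ∃ A : ℕ → ℂ → ℂ,
      (∀ n, Measurable (A n) ∧ eLpNorm (A n) ⊤ volume < ⊤) ∧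
      limsup (fun n : ℕ => ((eLpNorm (A n) ⊤ volume).toReal) ^ ((n:ℝ)⁻¹)) atTop ≤ 1 ∧
      ∀ t ∈ ball (0:ℂ) 1,
        Tendsto (fun n : ℕ =>
            eLpNorm (fun z => μ t z - ∑ k ∈ Finset.range (n+1), t ^ k * A k z) ⊤ volume)
          atTop (nhds 0) :=
  holomorphic_family_is_power_series_general μ hmeas hlocbd hholo
end

section
/- Counterexample to weak continuity of the Beltrami straightening (Appendix contrex): Fix κ ∈ (0,1) and set K = (1+κ)/(1−κ) and K′ = (1+K)/2 = 1/(1−κ). Define g : ℝ → ℝ by g(x) = ∫₀ˣ w(s) ds, where w(s) = 1 if ⌊s⌋ is even and w(s) = K if ⌊s⌋ is odd, and define f : ℂ → ℂ by f(x+iy) = g(x) + iy. Then: (a) for every z = x+iy ∈ ℂ, f(nz)/f(n) → x + iy/K′ as the integer n → ∞; (b) K′ ≠ (1+κ/2)/(1−κ/2), i.e. the limit map x+iy ↦ x + iy/K′ is not the normalized straightening of the weak limit μ ≡ κ/2 of the Beltrami coefficients. -/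
open Filter Topology MeasureTheory

/-!
On each period `[0, 2]` the step function `w` has mean `(1 + K) / 2 = K'`, so the primitive `g`
stays within bounded distance of `t ↦ K' t`. Hence `g (n x) / n → K' x`, and after dividing
`f (n z) = g (n x) + i n y` by `f n = g n` the imaginary part is compressed by the average
stretch `K'`. This is the arithmetic mean of the local stretches `1` and `K`, whereas the
straightening of the averaged coefficient `κ / 2` stretches by `h (κ / 2)`, and the two differ
as soon as `κ ≠ 0`.
-/

namespace Function.Periodic

variable {E : Type*} [NormedAddCommGroup E] [NormedSpace ℝ E]

theorem norm_intervalIntegral_le_of_integral_eq_zero {h : ℝ → E} {T C : ℝ} (hT : 0 < T)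
    (hper : Periodic h T) (hint : ∀ a b, IntervalIntegrable h volume a b)
    (hmean : ∫ s in (0 : ℝ)..T, h s = 0) (hC : ∀ s, ‖h s‖ ≤ C) (t : ℝ) :
    ‖∫ s in (0 : ℝ)..t, h s‖ ≤ C * T := by
  set r := toIcoMod hT 0 t
  have hr : r ∈ Set.Ico 0 T := by simpa using toIcoMod_mem_Ico hT 0 t
  have ht : t = r + toIcoDiv hT 0 t • T := (toIcoMod_add_toIcoDiv_zsmul hT 0 t).symm
  have hreduce : ∫ s in (0 : ℝ)..t, h s = ∫ s in (0 : ℝ)..r, h s := by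
    rw [ht, ← intervalIntegral.integral_add_adjacent_intervals (hint 0 r) (hint _ _),
      hper.intervalIntegral_add_zsmul_eq _ _ hint, hper.intervalIntegral_add_eq r 0, zero_add,
      hmean, smul_zero, add_zero]
  have hC0 : 0 ≤ C := (norm_nonneg _).trans (hC 0)
  calc ‖∫ s in (0 : ℝ)..t, h s‖ = ‖∫ s in (0 : ℝ)..r, h s‖ := by rw [hreduce]
    _ ≤ C * |r - 0| := intervalIntegral.norm_integral_le_of_norm_le_const fun s _ => hC s
    _ ≤ C * T := by rw [sub_zero, abs_of_nonneg hr.1]; exact mul_le_mul_of_nonneg_left hr.2.le hC0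

end Function.Periodic

theorem intervalIntegral_eq_of_eqOn_Ioo {f : ℝ → ℝ} {a b c : ℝ} (hab : a ≤ b)
    (hf : Set.EqOn f (fun _ => c) (Set.Ioo a b)) : ∫ s in a..b, f s = (b - a) * c := by
  rw [intervalIntegral.integral_of_le hab, integral_Ioc_eq_integral_Ioo,
    setIntegral_congr_fun measurableSet_Ioo hf]
  simp [hab]

noncomputable def alternatingStep (a b : ℝ) (s : ℝ) : ℝ := if Even ⌊s⌋ then a else b

namespace alternatingStep

variable (a b : ℝ)

theorem periodic : Function.Periodic (alternatingStep a b) 2 := by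
  intro s
  have hfloor : ⌊s + 2⌋ = ⌊s⌋ + 2 := by exact_mod_cast Int.floor_add_intCast s 2
  simp [alternatingStep, hfloor]

theorem measurable : Measurable (alternatingStep a b) :=
  (measurable_from_top (f := fun k : ℤ => if Even k then a else b)).comp Int.measurable_floor

theorem norm_le (s : ℝ) : ‖alternatingStep a b s‖ ≤ max ‖a‖ ‖b‖ := by
  unfold alternatingStep
  split_ifs
  exacts [le_max_left _ _, le_max_right _ _]

theorem intervalIntegrable (x y : ℝ) : IntervalIntegrable (alternatingStep a b) volume x y :=
  intervalIntegrable_const.mono_fun' (measurable a b).aestronglyMeasurable.restrict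
    (Eventually.of_forall (norm_le a b))

theorem integral_zero_two : ∫ s in (0 : ℝ)..2, alternatingStep a b s = a + b := by
  have hfloor {k : ℤ} {s : ℝ} (hs : s ∈ Set.Ioo (k : ℝ) (k + 1)) : ⌊s⌋ = k :=
    Int.floor_eq_iff.mpr ⟨hs.1.le, hs.2⟩
  have h01 : ∫ s in (0 : ℝ)..1, alternatingStep a b s = a := by
    rw [intervalIntegral_eq_of_eqOn_Ioo zero_le_one, sub_zero, one_mul]
    intro s hs
    simp [alternatingStep, hfloor (k := 0) (by simpa using hs)]
  have h12 : ∫ s in (1 : ℝ)..2, alternatingStep a b s = b := by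
    rw [intervalIntegral_eq_of_eqOn_Ioo one_le_two, show (2 : ℝ) - 1 = 1 by norm_num, one_mul]
    intro s hs
    simp [alternatingStep, hfloor (k := 1) (by norm_num; exact hs)]
  rw [← intervalIntegral.integral_add_adjacent_intervals (intervalIntegrable a b 0 1)
    (intervalIntegrable a b 1 2), h01, h12]

theorem abs_integral_sub_mul_le (t : ℝ) :
    |(∫ s in (0 : ℝ)..t, alternatingStep a b s) - (a + b) / 2 * t| ≤ |a - b| := by
  have hint : ∀ x y, IntervalIntegrable (fun s => alternatingStep a b s - (a + b) / 2) volume x y :=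
    fun x y => (intervalIntegrable a b x y).sub intervalIntegrable_const
  have hmean : ∫ s in (0 : ℝ)..2, (alternatingStep a b s - (a + b) / 2) = 0 := by
    rw [intervalIntegral.integral_sub (intervalIntegrable a b 0 2) intervalIntegrable_const,
      integral_zero_two]
    simp only [intervalIntegral.integral_const, smul_eq_mul]
    ring
  have hdev (s : ℝ) : ‖alternatingStep a b s - (a + b) / 2‖ ≤ |a - b| / 2 := by
    unfold alternatingStep
    split_ifs
    · rw [Real.norm_eq_abs, show a - (a + b) / 2 = (a - b) / 2 by ring, abs_div, abs_two]
    · rw [Real.norm_eq_abs, show b - (a + b) / 2 = -((a - b) / 2) by ring, abs_neg, abs_div,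
        abs_two]
  have hper : Function.Periodic (fun s => alternatingStep a b s - (a + b) / 2) 2 := fun s => by
    simp only [periodic a b s]
  have hbound := hper.norm_intervalIntegral_le_of_integral_eq_zero two_pos hint hmean hdev t
  rwa [intervalIntegral.integral_sub (intervalIntegrable a b 0 t) intervalIntegrable_const,
    intervalIntegral.integral_const, smul_eq_mul, sub_zero, Real.norm_eq_abs, mul_comm t,
    div_mul_cancel₀ _ two_ne_zero] at hbound

end alternatingStep

theorem tendsto_comp_natCast_mul_div_natCast {g : ℝ → ℝ} {L B : ℝ}
    (hg : ∀ t, |g t - L * t| ≤ B) (x : ℝ) :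
    Tendsto (fun n : ℕ => g (n * x) / n) atTop (𝓝 (L * x)) := by
  rw [← tendsto_sub_nhds_zero_iff]
  refine squeeze_zero_norm' ?_ (tendsto_const_div_atTop_nhds_zero_nat B)
  filter_upwards [eventually_gt_atTop 0] with n hn
  have hn' : (0 : ℝ) < n := Nat.cast_pos.mpr hn
  rw [show g (n * x) / n - L * x = (g (n * x) - L * (n * x)) / n by field_simp,
    Real.norm_eq_abs, abs_div, abs_of_pos hn']
  exact div_le_div_of_nonneg_right (hg _) hn'.le

theorem tendsto_rescale_of_tendsto_div_natCast {g : ℝ → ℝ} {L : ℝ} (hL : L ≠ 0)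
    (hg : ∀ x, Tendsto (fun n : ℕ => g (n * x) / n) atTop (𝓝 (L * x)))
    {f : ℂ → ℂ} (hf : ∀ z : ℂ, f z = (g z.re : ℂ) + (z.im : ℂ) * Complex.I) (z : ℂ) :
    Tendsto (fun n : ℕ => f ((n : ℂ) * z) / f (n : ℂ)) atTop
      (𝓝 ((z.re : ℂ) + ((z.im / L : ℝ) : ℂ) * Complex.I)) := by
  have hnum : Tendsto (fun n : ℕ => ((g (n * z.re) / n : ℝ) : ℂ) + (z.im : ℂ) * Complex.I)
      atTop (𝓝 (((L * z.re : ℝ) : ℂ) + (z.im : ℂ) * Complex.I)) :=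
    ((Complex.continuous_ofReal.tendsto _).comp (hg z.re)).add tendsto_const_nhds
  have hden : Tendsto (fun n : ℕ => ((g (n * 1) / n : ℝ) : ℂ)) atTop (𝓝 ((L * 1 : ℝ) : ℂ)) :=
    (Complex.continuous_ofReal.tendsto _).comp (hg 1)
  have hlim := hnum.div hden (by simpa using hL)
  have hL' : (L : ℂ) ≠ 0 := by exact_mod_cast hL
  rw [show ((z.re : ℂ) + ((z.im / L : ℝ) : ℂ) * Complex.I)
      = (((L * z.re : ℝ) : ℂ) + (z.im : ℂ) * Complex.I) / ((L * 1 : ℝ) : ℂ) by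
    push_cast; field_simp]
  refine hlim.congr' ?_
  filter_upwards [eventually_gt_atTop 0] with n hn
  have hn' : (n : ℂ) ≠ 0 := Nat.cast_ne_zero.mpr hn.ne'
  simp only [Pi.div_apply, hf, Complex.mul_re, Complex.mul_im, Complex.natCast_re,
    Complex.natCast_im, zero_mul, sub_zero, add_zero, mul_one, Complex.ofReal_div,
    Complex.ofReal_natCast]
  push_cast
  field_simp
  ring

theorem one_div_one_sub_ne_div {κ : ℝ} (hκ0 : 0 < κ) (hκ1 : κ < 1) :
    1 / (1 - κ) ≠ (1 + κ / 2) / (1 - κ / 2) := by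
  rw [Ne, div_eq_div_iff (by linarith) (by linarith)]
  nlinarith

/-- Appendix contrex: counterexample to weak continuity of the Beltrami straightening.
With `f(x+iy) = g(x) + iy` the normalized straightening of the Beltrami form equal to `0`
on vertical strips with even integer part of `Re z` and to `κ` on the odd ones
(`g' = 1` resp. `K = (1+κ)/(1−κ)` there), the rescalings `f(nz)/f(n)` converge to
`x + iy/K'` with `K' = (1+K)/2 = 1/(1−κ)`, whereas the straightening of the weak limit
`κ/2` of the Beltrami coefficients is `x + iy/h(κ/2)` with `h(κ/2) = (1+κ/2)/(1−κ/2) ≠ K'`. -/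
theorem weak_continuity_counterexample
    (κ : ℝ) (hκ : κ ∈ Set.Ioo (0:ℝ) 1)
    (K K' : ℝ) (hK : K = (1 + κ) / (1 - κ)) (hK' : K' = 1 / (1 - κ))
    (w : ℝ → ℝ) (hw : ∀ s : ℝ, w s = if Even ⌊s⌋ then 1 else K)
    (g : ℝ → ℝ) (hg : ∀ x : ℝ, g x = ∫ s in (0:ℝ)..x, w s)
    (f : ℂ → ℂ) (hf : ∀ z : ℂ, f z = (g z.re : ℂ) + (z.im : ℂ) * Complex.I) :
    (∀ z : ℂ, Tendsto (fun n : ℕ => f ((n:ℂ) * z) / f (n:ℂ)) atTop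
      (nhds ((z.re : ℂ) + ((z.im / K' : ℝ) : ℂ) * Complex.I))) ∧
    K' ≠ (1 + κ/2) / (1 - κ/2) := by
  obtain ⟨hκ0, hκ1⟩ := hκ
  have hmean : (1 + K) / 2 = K' := by rw [hK, hK']; field_simp; ring
  have hw' : w = alternatingStep 1 K := funext hw
  have hgK (t : ℝ) : |g t - K' * t| ≤ |1 - K| := by
    rw [hg, hw', ← hmean]
    exact alternatingStep.abs_integral_sub_mul_le 1 K t
  have hK'0 : K' ≠ 0 := by rw [hK']; positivity
  exact ⟨tendsto_rescale_of_tendsto_div_natCast hK'0 (tendsto_comp_natCast_mul_div_natCast hgK) hf,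
    hK' ▸ one_div_one_sub_ne_div hκ0 hκ1⟩
end
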